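/- arXiv:1504.06851 — 8 statements merged into one kernel-verified Lean document; each statement's English description precedes it below -/
import Mathlib

section
/- Let Q be a compact convex set in ℝ² with (cos α)·D_O ⊆ Q ⊆ D_O, where D_O is the unit disk centered at the origin and α ∈ (0, π/2). Let x ∈ ∂Q and let ℓ be a supporting line of Q at x. Then the angle between ℓ and the tangent line to D_O at any point of the arc of ∂D_O cut off by ℓ on the far side from the origin (the arc containing the point of ∂D_O on the ray from the origin through x) is at most α. -/
open scoped RealInnerProductSpace
open scoped Pointwise
open Real

abbrev E2 : Type := EuclideanSpace ℝ (Fin 2)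

/-- Let `Q` be compact convex with `(cos α) • D_O ⊆ Q ⊆ D_O`, `x ∈ ∂Q`, and let `ℓ` be a
supporting line of `Q` at `x`, encoded by a unit normal `n` (so `ℓ = {y | ⟪n, y - x⟫ = 0}`
and `Q ⊆ {y | ⟪n, y - x⟫ ≤ 0}`). For any point `z` of the unit circle lying on the arc cut
off by `ℓ` on the far side from the origin (i.e. `⟪n, z - x⟫ ≥ 0`), the (acute) angle between
`ℓ` and the tangent line to `D_O` at `z` (whose unit normal is `z`) is at most `α`. -/
theorem stmt_1 (α : ℝ) (hα : α ∈ Set.Ioo 0 (π / 2))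
    (Q : Set E2) (hQc : IsCompact Q) (hQconv : Convex ℝ Q)
    (hsub : Real.cos α • Metric.closedBall (0 : E2) 1 ⊆ Q)
    (hsup : Q ⊆ Metric.closedBall (0 : E2) 1)
    (x : E2) (hx : x ∈ frontier Q)
    (n : E2) (hn : ‖n‖ = 1)
    (hsupp : ∀ y ∈ Q, ⟪n, y - x⟫ ≤ 0) :
    ∀ z : E2, ‖z‖ = 1 → 0 ≤ ⟪n, z - x⟫ → Real.arccos |⟪n, z⟫| ≤ α := by
  intro z hz hnz
  obtain ⟨hα0, hα2⟩ := hα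
  have hcos : 0 < Real.cos α := Real.cos_pos_of_mem_Ioo ⟨by linarith [Real.pi_pos], hα2⟩
  have hyQ : Real.cos α • n ∈ Q := by
    apply hsub
    exact ⟨n, by simp [hn], rfl⟩
  have h1 : ⟪n, Real.cos α • n - x⟫ ≤ 0 := hsupp _ hyQ
  have h2 : ⟪n, Real.cos α • n - x⟫ = Real.cos α - ⟪n, x⟫ := by
    rw [inner_sub_right, real_inner_smul_right, real_inner_self_eq_norm_sq, hn]
    ring
  have hx1 : Real.cos α ≤ ⟪n, x⟫ := by linarith [h2 ▸ h1]
  have hz1 : Real.cos α ≤ ⟪n, z⟫ := by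
    have := inner_sub_right (𝕜 := ℝ) n z x
    linarith
  have habs : Real.cos α ≤ |⟪n, z⟫| := le_trans hz1 (le_abs_self _)
  have hle1 : |⟪n, z⟫| ≤ 1 := by
    have := abs_real_inner_le_norm n z
    rw [hn, hz] at this; simpa using this
  calc Real.arccos |⟪n, z⟫| ≤ Real.arccos (Real.cos α) := by
        rcases eq_or_lt_of_le habs with h | h
        · rw [h]
        · exact le_of_lt (Real.strictAntiOn_arccos
            ⟨by linarith, by linarith⟩ ⟨by linarith, hle1⟩ h)
    _ = α := Real.arccos_cos hα0.le (by linarith [Real.pi_pos])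
end

section
/- Let Q be a compact convex set in ℝ² with (cos α)·D_O ⊆ Q ⊆ D_O, where D_O is the unit disk centered at the origin and α ∈ (0, π/4). Let x, y be two distinct points of ∂Q, and let ℓ_x and ℓ_y be supporting lines of Q at x and y respectively. Then the difference between the acute angle that ℓ_x makes with the line through x and y, and the acute angle that ℓ_y makes with that line, is at most 2α. -/
/-!
A supporting line of `Q` at `w` with unit normal `m` has the disk of radius `cos α` on its
inner side, so `cos α ≤ ⟪m, w⟫`. For a line `L` through `w` with unit direction `d`, let `θ` be the
acute angle between the supporting line and `L` and `φ = arcsin (dist 0 L)`; Cauchy–Schwarz,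
applied separately to the components along and across `L`, gives
`sin (θ + φ) ≥ ⟪m, w⟫ ≥ cos α`, i.e. `|θ + φ - π/2| ≤ α`. For `L` the line through `x` and `y`
the term `φ` is the same at both points, so the two angles `θ` differ by at most `2α`.
-/

open scoped RealInnerProductSpace
open scoped Pointwise
open Real

lemma abs_le_of_cos_le_cos {α β : ℝ} (hα₀ : 0 ≤ α) (hαπ : α ≤ π) (hβ : |β| ≤ π)
    (h : cos α ≤ cos β) : |β| ≤ α := by
  rw [← cos_abs β] at h
  exact (strictAntiOn_cos.le_iff_ge ⟨hα₀, hαπ⟩ ⟨abs_nonneg β, hβ⟩).mp h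

lemma norm_le_one_of_mem_frontier {V : Type*} [SeminormedAddCommGroup V] {Q : Set V}
    (hQ : Q ⊆ Metric.closedBall (0 : V) 1) {x : V} (hx : x ∈ frontier Q) : ‖x‖ ≤ 1 :=
  mem_closedBall_zero_iff.mp <|
    closure_minimal hQ Metric.isClosed_closedBall (frontier_subset_closure hx)

section InnerProductSpace

variable {V : Type*} [NormedAddCommGroup V] [InnerProductSpace ℝ V]

lemma norm_sub_inner_smul_sq {d : V} (hd : ‖d‖ = 1) (w : V) :
    ‖w - ⟪w, d⟫ • d‖ ^ 2 = ‖w‖ ^ 2 - ⟪w, d⟫ ^ 2 := by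
  rw [norm_sub_sq_real, real_inner_smul_right, norm_smul, hd, Real.norm_eq_abs, mul_one, sq_abs]
  ring

lemma inner_eq_inner_mul_inner_add_inner_sub {d : V} (hd : ‖d‖ = 1) (m w : V) :
    ⟪m, w⟫ = ⟪m, d⟫ * ⟪w, d⟫ + ⟪m - ⟪m, d⟫ • d, w - ⟪w, d⟫ • d⟫ := by
  have hdd : ⟪d, d⟫ = 1 := by rw [real_inner_self_eq_norm_sq, hd, one_pow]
  simp only [inner_sub_left, inner_sub_right, real_inner_smul_left, real_inner_smul_right, hdd,
    real_inner_comm w d]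
  ring

lemma add_smul_sub_inner_smul {d : V} (hd : ‖d‖ = 1) (x : V) (c : ℝ) :
    x + c • d - ⟪x + c • d, d⟫ • d = x - ⟪x, d⟫ • d := by
  rw [inner_add_left, real_inner_smul_left, real_inner_self_eq_norm_sq, hd]
  module

lemma inner_le_abs_mul_sqrt_add_sqrt_mul {m w d : V} (hm : ‖m‖ = 1) (hd : ‖d‖ = 1)
    (hw : ‖w‖ ≤ 1) :
    ⟪m, w⟫ ≤ |⟪m, d⟫| * √(1 - ‖w - ⟪w, d⟫ • d‖ ^ 2) +
      √(1 - ⟪m, d⟫ ^ 2) * ‖w - ⟪w, d⟫ • d‖ := by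
  have hm_perp : ‖m - ⟪m, d⟫ • d‖ = √(1 - ⟪m, d⟫ ^ 2) := by
    rw [← sqrt_sq (norm_nonneg (m - _)), norm_sub_inner_smul_sq hd, hm, one_pow]
  have ht : |⟪w, d⟫| ≤ √(1 - ‖w - ⟪w, d⟫ • d‖ ^ 2) := by
    rw [← sqrt_sq_eq_abs]
    apply sqrt_le_sqrt
    nlinarith [norm_sub_inner_smul_sq hd w, norm_nonneg w]
  have h_along : ⟪m, d⟫ * ⟪w, d⟫ ≤ |⟪m, d⟫| * √(1 - ‖w - ⟪w, d⟫ • d‖ ^ 2) :=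
    (le_abs_self _).trans ((abs_mul _ _).trans_le (mul_le_mul_of_nonneg_left ht (abs_nonneg _)))
  have h_perp := real_inner_le_norm (m - ⟪m, d⟫ • d) (w - ⟪w, d⟫ • d)
  rw [hm_perp] at h_perp
  rw [inner_eq_inner_mul_inner_add_inner_sub hd m w]
  exact add_le_add h_along h_perp

lemma le_inner_of_smul_closedBall_subset {r : ℝ} {Q : Set V}
    (hQ : r • Metric.closedBall (0 : V) 1 ⊆ Q) {n x : V} (hn : ‖n‖ = 1)
    (hsupp : ∀ w ∈ Q, ⟪n, w - x⟫ ≤ 0) : r ≤ ⟪n, x⟫ := by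
  have h := hsupp (r • n) (hQ (Set.smul_mem_smul_set (by simp [hn])))
  rw [inner_sub_right, real_inner_smul_right, real_inner_self_eq_norm_sq, hn] at h
  linarith

lemma abs_arcsin_add_arcsin_sub_pi_div_two_le {α : ℝ} (hα₀ : 0 ≤ α) (hαπ : α ≤ π) {m w d : V}
    (hm : ‖m‖ = 1) (hd : ‖d‖ = 1) (hw : ‖w‖ ≤ 1) (h : cos α ≤ ⟪m, w⟫) :
    |arcsin |⟪m, d⟫| + arcsin ‖w - ⟪w, d⟫ • d‖ - π / 2| ≤ α := by
  have hs : |⟪m, d⟫| ≤ 1 := by simpa [hm, hd] using abs_real_inner_le_norm m d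
  have hp : ‖w - ⟪w, d⟫ • d‖ ≤ 1 := by
    nlinarith [norm_sub_inner_smul_sq hd w, norm_nonneg w, norm_nonneg (w - ⟪w, d⟫ • d)]
  have h_sin : cos α ≤ sin (arcsin |⟪m, d⟫| + arcsin ‖w - ⟪w, d⟫ • d‖) := by
    rw [sin_add, sin_arcsin (by linarith [abs_nonneg ⟪m, d⟫]) hs, cos_arcsin ‖_‖,
      sin_arcsin (by linarith [norm_nonneg (w - ⟪w, d⟫ • d)]) hp, cos_arcsin |_|, sq_abs]
    exact h.trans (inner_le_abs_mul_sqrt_add_sqrt_mul hm hd hw)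
  refine abs_le_of_cos_le_cos hα₀ hαπ ?_ (by rwa [cos_sub_pi_div_two])
  rw [abs_le]
  constructor <;>
    linarith [arcsin_nonneg.mpr (abs_nonneg ⟪m, d⟫), arcsin_le_pi_div_two |⟪m, d⟫|,
      arcsin_nonneg.mpr (norm_nonneg (w - ⟪w, d⟫ • d)), arcsin_le_pi_div_two ‖w - ⟪w, d⟫ • d‖]

end InnerProductSpace

/-- A supporting line is encoded by a unit normal; the acute angle between the line with unit
normal `m` and a line with unit direction `d` is `arcsin |⟪m, d⟫|`. -/
theorem stmt_2_general (α : ℝ) (hα : α ∈ Set.Ioo 0 (π / 4))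
    (Q : Set E2)
    (hsub : Real.cos α • Metric.closedBall (0 : E2) 1 ⊆ Q)
    (hsup : Q ⊆ Metric.closedBall (0 : E2) 1)
    (x y : E2) (hx : x ∈ frontier Q) (hy : y ∈ frontier Q) (hxy : x ≠ y)
    (nx ny : E2) (hnx : ‖nx‖ = 1) (hny : ‖ny‖ = 1)
    (hsuppx : ∀ w ∈ Q, ⟪nx, w - x⟫ ≤ 0)
    (hsuppy : ∀ w ∈ Q, ⟪ny, w - y⟫ ≤ 0) :
    abs (Real.arcsin |⟪nx, ‖y - x‖⁻¹ • (y - x)⟫| -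
        Real.arcsin |⟪ny, ‖y - x‖⁻¹ • (y - x)⟫|) ≤ 2 * α := by
  obtain ⟨hα₀, hα⟩ := hα
  have hαπ : α ≤ π := by linarith [pi_pos]
  set d := ‖y - x‖⁻¹ • (y - x)
  have hd : ‖d‖ = 1 := norm_smul_inv_norm (sub_ne_zero.mpr hxy.symm)
  have h_same_line : y - ⟪y, d⟫ • d = x - ⟪x, d⟫ • d := by
    have hy_eq : y = x + ‖y - x‖ • d := by
      rw [smul_smul, mul_inv_cancel₀ (norm_ne_zero_iff.mpr (sub_ne_zero.mpr hxy.symm)),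
        one_smul, add_sub_cancel]
    rw [hy_eq]
    exact add_smul_sub_inner_smul hd x _
  have hkx := abs_arcsin_add_arcsin_sub_pi_div_two_le hα₀.le hαπ hnx hd
    (norm_le_one_of_mem_frontier hsup hx) (le_inner_of_smul_closedBall_subset hsub hnx hsuppx)
  have hky := abs_arcsin_add_arcsin_sub_pi_div_two_le hα₀.le hαπ hny hd
    (norm_le_one_of_mem_frontier hsup hy) (le_inner_of_smul_closedBall_subset hsub hny hsuppy)
  rw [h_same_line] at hky
  rw [abs_le] at hkx hky ⊢
  constructor <;> linarith

/-- Let `Q` be compact convex with `(cos α) • D_O ⊆ Q ⊆ D_O`, `α ∈ (0, π/4)`. Let `x ≠ y` be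
boundary points of `Q` with supporting lines `ℓ_x`, `ℓ_y` encoded by unit normals `nx`, `ny`.
The acute angle between a line with unit normal `m` and the line through `x, y` (unit direction
`d`) is `arcsin |⟪m, d⟫|`. The two acute angles that `ℓ_x` and `ℓ_y` make with the line `xy`
differ by at most `2α`. -/
theorem stmt_2 (α : ℝ) (hα : α ∈ Set.Ioo 0 (π / 4))
    (Q : Set E2) (hQc : IsCompact Q) (hQconv : Convex ℝ Q)
    (hsub : Real.cos α • Metric.closedBall (0 : E2) 1 ⊆ Q)
    (hsup : Q ⊆ Metric.closedBall (0 : E2) 1)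
    (x y : E2) (hx : x ∈ frontier Q) (hy : y ∈ frontier Q) (hxy : x ≠ y)
    (nx ny : E2) (hnx : ‖nx‖ = 1) (hny : ‖ny‖ = 1)
    (hsuppx : ∀ w ∈ Q, ⟪nx, w - x⟫ ≤ 0)
    (hsuppy : ∀ w ∈ Q, ⟪ny, w - y⟫ ≤ 0) :
    abs (Real.arcsin |⟪nx, ‖y - x‖⁻¹ • (y - x)⟫| -
        Real.arcsin |⟪ny, ‖y - x‖⁻¹ • (y - x)⟫|) ≤ 2 * α :=
  stmt_2_general α hα Q hsub hsup x y hx hy hxy nx ny hnx hny hsuppx hsuppy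
end

section
/- Let Q be a compact convex set in ℝ² with (cos α)·D_O ⊆ Q ⊆ D_O, where D_O is the unit disk centered at the origin o and α ∈ (0, π/2). For any point p ∈ ∂Q, any supporting line of Q at p makes an angle of at most α with the line through p orthogonal to the vector op. -/
open scoped RealInnerProductSpace
open scoped Pointwise
open Real

/-- Let `Q` be compact convex with `(cos α) • D_O ⊆ Q ⊆ D_O`, `α ∈ (0, π/2)`, and `p ∈ ∂Q`.
Any supporting line of `Q` at `p` (encoded by a unit normal `n`) makes an acute angle of at
most `α` with the line through `p` orthogonal to the vector `op` (a line whose unit normal is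
`p/‖p‖`); the acute angle between two lines with unit normals `n`, `p/‖p‖` is
`arccos (|⟪n, p⟫| / ‖p‖)`. -/
theorem stmt_3 (α : ℝ) (hα : α ∈ Set.Ioo 0 (π / 2))
    (Q : Set E2) (hQc : IsCompact Q) (hQconv : Convex ℝ Q)
    (hsub : Real.cos α • Metric.closedBall (0 : E2) 1 ⊆ Q)
    (hsup : Q ⊆ Metric.closedBall (0 : E2) 1)
    (p : E2) (hp : p ∈ frontier Q)
    (n : E2) (hn : ‖n‖ = 1)
    (hsupp : ∀ y ∈ Q, ⟪n, y - p⟫ ≤ 0) :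
    Real.arccos (|⟪n, p⟫| / ‖p‖) ≤ α := by
  obtain ⟨hα0, hα2⟩ := hα
  have hcos : 0 < Real.cos α := Real.cos_pos_of_mem_Ioo ⟨by linarith [Real.pi_pos], hα2⟩
  -- p ≠ 0 since 0 is in the interior of Q
  have h0int : (0 : E2) ∈ interior Q := by
    have hb : Metric.ball (0 : E2) (Real.cos α) ⊆ Q := by
      intro x hx
      have : x ∈ Real.cos α • Metric.closedBall (0 : E2) 1 := by
        rw [smul_closedBall _ _ zero_le_one]
        simp only [smul_zero, Real.norm_eq_abs, abs_of_pos hcos, mul_one]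
        exact Metric.ball_subset_closedBall hx
      exact hsub this
    exact mem_interior.2 ⟨_, hb, Metric.isOpen_ball, Metric.mem_ball_self hcos⟩
  have hp0 : p ≠ 0 := by
    intro h
    rw [frontier, h] at hp
    exact hp.2 h0int
  have hpn : 0 < ‖p‖ := norm_pos_iff.2 hp0
  have hp1 : ‖p‖ ≤ 1 := by
    have hpQ : p ∈ Q := hQc.isClosed.closure_eq ▸ hp.1
    simpa using mem_closedBall_iff_norm.1 (hsup hpQ)
  -- cos α ≤ ⟪n, p⟫
  have hyQ : Real.cos α • n ∈ Q := by
    apply hsub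
    exact Set.smul_mem_smul_set (by simp [hn])
  have hkey : Real.cos α ≤ ⟪n, p⟫ := by
    have := hsupp _ hyQ
    rw [inner_sub_right, real_inner_smul_right, real_inner_self_eq_norm_sq, hn] at this
    linarith
  have habs : Real.cos α ≤ |⟪n, p⟫| / ‖p‖ := by
    have h1 : Real.cos α ≤ |⟪n, p⟫| := le_trans hkey (le_abs_self _)
    rw [le_div_iff₀ hpn]
    calc Real.cos α * ‖p‖ ≤ Real.cos α * 1 := by
          exact mul_le_mul_of_nonneg_left hp1 hcos.le
      _ = Real.cos α := mul_one _
      _ ≤ |⟪n, p⟫| := h1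
  calc Real.arccos (|⟪n, p⟫| / ‖p‖) ≤ Real.arccos (Real.cos α) :=
        by
          rw [Real.arccos, Real.arccos]
          have := Real.monotone_arcsin habs
          linarith
    _ = α := Real.arccos_cos hα0.le (by linarith [Real.pi_pos])
end

section
/- Let p, q ∈ ℝ² be distinct, let D₁ and D₂ be closed disks through p and q whose centers w₁, w₂ lie on rays from p making an angle β = ∠w₁pw₂ with each other. Let ℓ be a line through q making an angle of at least α/2 with the tangent to D₁ at q and at least α/2 with the tangent to D₂ at q (where both tangents are measured as acute angles and ℓ separates appropriately). If a chord of D₁ along ℓ through q subtends an angle at least α/2 at p, and similarly for D₂, then any segment on ℓ through q that subtends an angle of at most α/2 at p is contained in the union of the two chords ℓ ∩ D₁ and ℓ ∩ D₂. -/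
open Real EuclideanGeometry

noncomputable instance : Fact (Module.finrank ℝ E2 = 2) :=
  ⟨finrank_euclideanSpace_fin⟩

noncomputable instance : Module.Oriented ℝ E2 (Fin 2) :=
  ⟨(EuclideanSpace.basisFun (Fin 2) ℝ).toBasis.orientation⟩

/-- Additivity of |toReal| for angles with coherent signs. -/
lemma abs_toReal_add_of_sign {θ₁ θ₂ : Real.Angle} (h1 : θ₁.sign ≠ 0)
    (h12 : θ₁.sign = θ₂.sign) (h13 : θ₁.sign = (θ₁ + θ₂).sign) :
    |(θ₁ + θ₂).toReal| = |θ₁.toReal| + |θ₂.toReal| := by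
  have h2 : θ₂.sign ≠ 0 := h12 ▸ h1
  have h3 : (θ₁ + θ₂).sign ≠ 0 := h13 ▸ h1
  have hpi := Real.pi_pos
  have hb1 := Real.Angle.abs_toReal_le_pi θ₁
  have hb2 := Real.Angle.abs_toReal_le_pi θ₂
  have hne1 := Real.Angle.sign_ne_zero_iff.1 h1
  have hne2 := Real.Angle.sign_ne_zero_iff.1 h2
  have hne3 := Real.Angle.sign_ne_zero_iff.1 h3
  have ht1 : θ₁.toReal ≠ 0 := fun h => hne1.1 (Real.Angle.toReal_eq_zero_iff.1 h)
  have ht2 : θ₂.toReal ≠ 0 := fun h => hne2.1 (Real.Angle.toReal_eq_zero_iff.1 h)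
  have htp1 : θ₁.toReal ≠ π := fun h => hne1.2 (Real.Angle.toReal_eq_pi_iff.1 h)
  have htp2 : θ₂.toReal ≠ π := fun h => hne2.2 (Real.Angle.toReal_eq_pi_iff.1 h)
  have habs1 : |θ₁.toReal| < π := lt_of_le_of_ne hb1 (by
    rcases abs_choice θ₁.toReal with h | h
    · rw [h]; exact htp1
    · rw [h]; intro hc; linarith [Real.Angle.neg_pi_lt_toReal θ₁] )
  have habs2 : |θ₂.toReal| < π := lt_of_le_of_ne hb2 (by
    rcases abs_choice θ₂.toReal with h | h
    · rw [h]; exact htp2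
    · rw [h]; intro hc; linarith [Real.Angle.neg_pi_lt_toReal θ₂] )
  have hsum : θ₁ + θ₂ = ((θ₁.toReal + θ₂.toReal : ℝ) : Real.Angle) := by
    rw [Real.Angle.coe_add, Real.Angle.coe_toReal, Real.Angle.coe_toReal]
  rcases lt_or_gt_of_ne ht1 with hneg | hpos
  · -- all toReal negative
    have hs1 : θ₁.sign = -1 := Real.Angle.toReal_neg_iff_sign_neg.1 hneg
    have hneg2 : θ₂.toReal < 0 :=
      Real.Angle.toReal_neg_iff_sign_neg.2 (h12 ▸ hs1)
    have hneg3 : (θ₁ + θ₂).toReal < 0 :=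
      Real.Angle.toReal_neg_iff_sign_neg.2 (h13 ▸ hs1)
    have hlb1 : -π < θ₁.toReal := Real.Angle.neg_pi_lt_toReal θ₁
    have hlb2 : -π < θ₂.toReal := Real.Angle.neg_pi_lt_toReal θ₂
    rcases lt_or_ge (-π) (θ₁.toReal + θ₂.toReal) with ht | ht
    · have h3 : (θ₁ + θ₂).toReal = θ₁.toReal + θ₂.toReal := by
        rw [hsum, Real.Angle.toReal_coe_eq_self_iff]
        constructor
        · exact ht
        · linarith
      rw [h3, abs_of_neg (by linarith), abs_of_neg hneg, abs_of_neg hneg2]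
      ring
    · exfalso
      have h3 : (θ₁ + θ₂).toReal = θ₁.toReal + θ₂.toReal + 2 * π := by
        have hcoe : (θ₁ + θ₂ : Real.Angle)
            = ((θ₁.toReal + θ₂.toReal + 2 * π : ℝ) : Real.Angle) := by
          rw [hsum, Real.Angle.coe_add (θ₁.toReal + θ₂.toReal) (2 * π), Real.Angle.coe_two_pi, add_zero]
        rw [hcoe, Real.Angle.toReal_coe_eq_self_iff]
        constructor
        · linarith
        · linarith
      linarith
  · -- all toReal positive
    have hs1 : θ₁.sign ≠ -1 := fun h =>
      absurd (Real.Angle.toReal_neg_iff_sign_neg.2 h) (by linarith)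
    have hpos2 : 0 < θ₂.toReal := by
      rcases lt_trichotomy θ₂.toReal 0 with h | h | h
      · exact absurd (h12.trans (Real.Angle.toReal_neg_iff_sign_neg.1 h)) hs1
      · exact absurd h ht2
      · exact h
    have hpos3 : 0 < (θ₁ + θ₂).toReal := by
      rcases lt_trichotomy (θ₁ + θ₂).toReal 0 with h | h | h
      · exact absurd (h13.trans (Real.Angle.toReal_neg_iff_sign_neg.1 h)) hs1
      · exact absurd h (fun hh => hne3.1 (Real.Angle.toReal_eq_zero_iff.1 hh))
      · exact h
    have hub1 : θ₁.toReal < π := lt_of_abs_lt habs1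
    have hub2 : θ₂.toReal < π := lt_of_abs_lt habs2
    rcases le_or_gt (θ₁.toReal + θ₂.toReal) π with ht | ht
    · have h3 : (θ₁ + θ₂).toReal = θ₁.toReal + θ₂.toReal := by
        rw [hsum, Real.Angle.toReal_coe_eq_self_iff]
        constructor
        · linarith
        · exact ht
      rw [h3, abs_of_pos (by linarith), abs_of_pos hpos, abs_of_pos hpos2]
    · exfalso
      have h3 : (θ₁ + θ₂).toReal = θ₁.toReal + θ₂.toReal - 2 * π := by
        have hcoe : (θ₁ + θ₂ : Real.Angle)
            = ((θ₁.toReal + θ₂.toReal - 2 * π : ℝ) : Real.Angle) := by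
          rw [hsum, Real.Angle.coe_sub (θ₁.toReal + θ₂.toReal) (2 * π), Real.Angle.coe_two_pi, sub_zero]
        rw [hcoe, Real.Angle.toReal_coe_eq_self_iff]
        constructor
        · linarith
        · linarith
      linarith

lemma angle_pos_of_not_collinear (p x y : E2)
    (hp : ¬ Collinear ℝ ({p, x, y} : Set E2)) : 0 < ∠ x p y := by
  rcases (EuclideanGeometry.angle_nonneg x p y).lt_or_eq with h | h
  · exact h
  · exfalso
    rcases EuclideanGeometry.angle_eq_zero_iff_ne_and_wbtw.1 h.symm with ⟨_, hw⟩ | ⟨_, hw⟩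
    · exact hp hw.collinear
    · exact hp (by simpa [Set.insert_comm, Set.pair_comm] using hw.collinear)

lemma angle_add_of_sbtw (p x y z : E2) (h : Sbtw ℝ x y z)
    (hp : ¬ Collinear ℝ ({p, x, y} : Set E2)) :
    ∠ x p z = ∠ x p y + ∠ y p z := by
  have hxp : x ≠ p := by
    rintro rfl
    exact hp (by simpa using collinear_pair ℝ x y)
  have hyp : y ≠ p := by
    rintro rfl
    exact hp (by rw [Set.insert_comm]; simpa using collinear_pair ℝ x y)
  have hzp : z ≠ p := by
    rintro rfl
    apply hp
    have hcl := h.wbtw.collinear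
    have hset : ({x, y, z} : Set E2) = {z, x, y} := by
      ext w
      simp only [Set.mem_insert_iff, Set.mem_singleton_iff]
      tauto
    rwa [hset] at hcl
  have hc1 : ¬ Collinear ℝ ({x, p, y} : Set E2) := by
    rw [Set.insert_comm]; exact hp
  have hang : ∡ x p y ≠ 0 ∧ ∡ x p y ≠ Real.pi := by
    rw [← not_or]
    intro hor
    exact hc1 (EuclideanGeometry.oangle_eq_zero_or_eq_pi_iff_collinear.1 hor)
  have hs : (∡ x p y).sign ≠ 0 := Real.Angle.sign_ne_zero_iff.2 hang
  have h12 := h.oangle_sign_eq p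
  have h13 := h.oangle_sign_eq_left p
  have hadd := EuclideanGeometry.oangle_add hxp hyp hzp
  rw [EuclideanGeometry.angle_eq_abs_oangle_toReal hxp hzp,
      EuclideanGeometry.angle_eq_abs_oangle_toReal hxp hyp,
      EuclideanGeometry.angle_eq_abs_oangle_toReal hyp hzp, ← hadd]
  exact abs_toReal_add_of_sign hs h12 (by rw [hadd]; exact h13)

/-- Containment step from Lemma 3.2: `D₁`, `D₂` are closed disks through `p` and `q`;
`ℓ` is a line through `q` meeting `D₁` in the chord `q₁q` and `D₂` in the chord `qq₂`;
if each of these chords subtends an angle of at least `α/2` at `p`, then any segment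
`a₁a₂` on `ℓ` through `q` (with `a₁` on the `q₁` side and `a₂` on the `q₂` side) that
subtends an angle of at most `α/2` at `p` is contained in the union `q₁q₂` of the chords. -/
theorem stmt_6 (α : ℝ) (hα : 0 < α)
    (p q q₁ q₂ a₁ a₂ c₁ c₂ : E2) (r₁ r₂ : ℝ) (hr₁ : 0 < r₁) (hr₂ : 0 < r₂)
    (hq₁c : dist q₁ c₁ = r₁) (hqc₁ : dist q c₁ = r₁) (hpc₁ : dist p c₁ = r₁)
    (hq₂c : dist q₂ c₂ = r₂) (hqc₂ : dist q c₂ = r₂) (hpc₂ : dist p c₂ = r₂)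
    (hq₁q : q₁ ≠ q) (hq₂q : q₂ ≠ q)
    (hpnotline : ¬ Collinear ℝ ({p, q₁, q₂} : Set E2))
    (hcol : Collinear ℝ ({q₁, q, q₂, a₁, a₂} : Set E2))
    (hqbet : q ∈ segment ℝ q₁ q₂) (hqbet' : q ∈ segment ℝ a₁ a₂)
    (hside₁ : SameRay ℝ (a₁ - q) (q₁ - q)) (hside₂ : SameRay ℝ (a₂ - q) (q₂ - q))
    (hch₁ : α / 2 ≤ ∠ q₁ p q) (hch₂ : α / 2 ≤ ∠ q p q₂)
    (ha : ∠ a₁ p a₂ ≤ α / 2) :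
    segment ℝ a₁ a₂ ⊆ segment ℝ q₁ q₂ := by
  have hq12 : q₁ ≠ q₂ := by
    rintro rfl
    exact hpnotline (by simpa using collinear_pair ℝ p q₁)
  set L := affineSpan ℝ ({q₁, q₂} : Set E2) with hLdef
  have hq₁L : q₁ ∈ L := subset_affineSpan ℝ _ (by simp)
  have hq₂L : q₂ ∈ L := subset_affineSpan ℝ _ (by simp)
  have hmem : ∀ x ∈ ({q₁, q, q₂, a₁, a₂} : Set E2), x ∈ L := fun x hx =>
    hcol.mem_affineSpan_of_mem_of_ne (by simp) (by simp) hx hq12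
  have hqL : q ∈ L := hmem q (by simp)
  have ha₁L : a₁ ∈ L := hmem a₁ (by simp)
  have ha₂L : a₂ ∈ L := hmem a₂ (by simp)
  have hnc : ∀ x y : E2, x ∈ L → y ∈ L → x ≠ y →
      ¬ Collinear ℝ ({p, x, y} : Set E2) := by
    intro x y hx hy hxy hc
    have hpℓ : p ∈ affineSpan ℝ ({x, y} : Set E2) :=
      hc.mem_affineSpan_of_mem_of_ne (by simp) (by simp) (by simp) hxy
    have hle : affineSpan ℝ ({x, y} : Set E2) ≤ L := by
      rw [affineSpan_le]
      intro z hz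
      rcases hz with rfl | rfl
      · exact hx
      · exact hy
    exact hpnotline
      ((collinear_insert_iff_of_mem_affineSpan (hle hpℓ)).2 (collinear_pair ℝ q₁ q₂))
  have key₁ : a₁ ∈ segment ℝ q₁ q₂ := by
    by_cases ha₁q : a₁ = q
    · rw [ha₁q]; exact hqbet
    · have hne : q₁ - q ≠ 0 := sub_ne_zero.2 hq₁q
      obtain ⟨t, ht0, hteq⟩ := (exists_nonneg_left_iff_sameRay hne).2 hside₁.symm
      have htpos : 0 < t := by
        rcases ht0.lt_or_eq with h | h
        · exact h
        · exfalso
          apply ha₁q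
          rw [← h, zero_smul] at hteq
          exact sub_eq_zero.1 hteq.symm
      have hlm : AffineMap.lineMap q q₁ t = a₁ := by
        simp only [AffineMap.lineMap_apply, vsub_eq_sub, vadd_eq_add, hteq]
        abel
      rcases le_or_gt t 1 with ht1 | ht1
      · have hw : Wbtw ℝ q a₁ q₁ := by
          rw [← hlm]
          exact wbtw_lineMap_iff.2 (Or.inr ⟨ht0, ht1⟩)
        exact (convex_segment q₁ q₂).segment_subset hqbet
          (left_mem_segment ℝ q₁ q₂) hw.mem_segment
      · exfalso
        have hsb : Sbtw ℝ q q₁ a₁ := by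
          have hq₁lm : AffineMap.lineMap q a₁ t⁻¹ = q₁ := by
            rw [← hlm]
            simp only [AffineMap.lineMap_apply, vsub_eq_sub, vadd_eq_add,
              add_sub_cancel_right, smul_smul, inv_mul_cancel₀ (ne_of_gt htpos), one_smul]
            abel
          rw [← hq₁lm]
          exact sbtw_lineMap_iff.2 ⟨fun h => ha₁q h.symm,
            ⟨inv_pos.2 htpos, inv_lt_one_of_one_lt₀ ht1⟩⟩
        have ha₁q₁ : a₁ ≠ q₁ := fun h => hsb.ne_right h.symm
        have e1 : ∠ a₁ p q = ∠ a₁ p q₁ + ∠ q₁ p q :=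
          angle_add_of_sbtw p a₁ q₁ q hsb.symm (hnc a₁ q₁ ha₁L hq₁L ha₁q₁)
        have e2 : 0 < ∠ a₁ p q₁ :=
          angle_pos_of_not_collinear p a₁ q₁ (hnc a₁ q₁ ha₁L hq₁L ha₁q₁)
        by_cases ha₂q : a₂ = q
        · rw [ha₂q] at ha; linarith
        · have hsb2 : Sbtw ℝ a₁ q a₂ :=
            ⟨mem_segment_iff_wbtw.1 hqbet', Ne.symm ha₁q, Ne.symm ha₂q⟩
          have e4 : ∠ a₁ p a₂ = ∠ a₁ p q + ∠ q p a₂ :=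
            angle_add_of_sbtw p a₁ q a₂ hsb2 (hnc a₁ q ha₁L hqL ha₁q)
          have e5 : 0 ≤ ∠ q p a₂ := EuclideanGeometry.angle_nonneg _ _ _
          linarith
  have key₂ : a₂ ∈ segment ℝ q₁ q₂ := by
    by_cases ha₂q : a₂ = q
    · rw [ha₂q]; exact hqbet
    · have hne : q₂ - q ≠ 0 := sub_ne_zero.2 hq₂q
      obtain ⟨t, ht0, hteq⟩ := (exists_nonneg_left_iff_sameRay hne).2 hside₂.symm
      have htpos : 0 < t := by
        rcases ht0.lt_or_eq with h | h
        · exact h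
        · exfalso
          apply ha₂q
          rw [← h, zero_smul] at hteq
          exact sub_eq_zero.1 hteq.symm
      have hlm : AffineMap.lineMap q q₂ t = a₂ := by
        simp only [AffineMap.lineMap_apply, vsub_eq_sub, vadd_eq_add, hteq]
        abel
      rcases le_or_gt t 1 with ht1 | ht1
      · have hw : Wbtw ℝ q a₂ q₂ := by
          rw [← hlm]
          exact wbtw_lineMap_iff.2 (Or.inr ⟨ht0, ht1⟩)
        exact (convex_segment q₁ q₂).segment_subset hqbet
          (right_mem_segment ℝ q₁ q₂) hw.mem_segment
      · exfalso
        have hsb : Sbtw ℝ q q₂ a₂ := by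
          have hq₂lm : AffineMap.lineMap q a₂ t⁻¹ = q₂ := by
            rw [← hlm]
            simp only [AffineMap.lineMap_apply, vsub_eq_sub, vadd_eq_add,
              add_sub_cancel_right, smul_smul, inv_mul_cancel₀ (ne_of_gt htpos), one_smul]
            abel
          rw [← hq₂lm]
          exact sbtw_lineMap_iff.2 ⟨fun h => ha₂q h.symm,
            ⟨inv_pos.2 htpos, inv_lt_one_of_one_lt₀ ht1⟩⟩
        have ha₂q₂ : q₂ ≠ a₂ := hsb.ne_right
        have e1 : ∠ q p a₂ = ∠ q p q₂ + ∠ q₂ p a₂ :=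
          angle_add_of_sbtw p q q₂ a₂ hsb (hnc q q₂ hqL hq₂L (Ne.symm hq₂q))
        have e2 : 0 < ∠ q₂ p a₂ :=
          angle_pos_of_not_collinear p q₂ a₂ (hnc q₂ a₂ hq₂L ha₂L ha₂q₂)
        by_cases ha₁q : a₁ = q
        · rw [ha₁q] at ha
          linarith
        · have hsb2 : Sbtw ℝ a₁ q a₂ :=
            ⟨mem_segment_iff_wbtw.1 hqbet', Ne.symm ha₁q, Ne.symm ha₂q⟩
          have e4 : ∠ a₁ p a₂ = ∠ a₁ p q + ∠ q p a₂ :=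
            angle_add_of_sbtw p a₁ q a₂ hsb2 (hnc a₁ q ha₁L hqL ha₁q)
          have e5 : 0 ≤ ∠ a₁ p q := EuclideanGeometry.angle_nonneg _ _ _
          linarith
  exact (convex_segment q₁ q₂).segment_subset key₁ key₂
end

section
/- Let β > 1 and let P be a finite planar point set in general position. Let pq be an edge of the β-skeleton of P: the union of the two closed disks of radius (β/2)‖pq‖ passing through both p and q contains no point of P \ {p,q}. Then pq is an edge of DT(P), and pq is 2θ-stable, where θ = arccos(1/β). In particular, for β ≥ 1 + c·α² with a suitable absolute constant c > 0, every β-skeleton edge is α-stable in DT(P). -/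
open Real EuclideanGeometry

/-- `pq` is an edge of the Euclidean Delaunay triangulation of `P`: there is a circle through
`p` and `q` enclosing no point of `P` in its interior. -/
def DelaunayEdge (P : Set E2) (p q : E2) : Prop :=
  p ∈ P ∧ q ∈ P ∧ p ≠ q ∧
    ∃ c : E2, dist p c = dist q c ∧ ∀ x ∈ P, dist p c ≤ dist x c

/-- `pqr` is a triangle of the Euclidean Delaunay triangulation of `P`: its circumcircle
encloses no point of `P` in its interior. -/
def DelaunayTriangle (P : Set E2) (p q r : E2) : Prop :=
  p ∈ P ∧ q ∈ P ∧ r ∈ P ∧ ¬ Collinear ℝ ({p, q, r} : Set E2) ∧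
    ∃ c : E2, dist p c = dist q c ∧ dist p c = dist r c ∧ ∀ x ∈ P, dist p c ≤ dist x c

/-- The edge `pq` of the Delaunay triangulation of `P` is `α`-stable: the angles opposite to
`pq` in its (at most two) adjacent Delaunay triangles sum to at most `π - α` (a missing
triangle, for a hull edge, contributes angle `0`).  Since Delaunay apexes maximize the angle
subtended by `pq` on their side of the line `pq`, this is expressed equivalently: for every
pair of points of `P` strictly on opposite sides of the line `pq` the subtended angles sum to
at most `π - α`, and every point of `P` off the line `pq` subtends an angle at most `π - α`. -/
def StableEdge (α : ℝ) (P : Set E2) (p q : E2) : Prop :=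
  DelaunayEdge P p q ∧
  (∀ x ∈ P, ∀ y ∈ P, (affineSpan ℝ ({p, q} : Set E2)).SOppSide x y →
      ∠ p x q + ∠ p y q ≤ π - α) ∧
  (∀ x ∈ P, x ∉ affineSpan ℝ ({p, q} : Set E2) → ∠ p x q ≤ π - α)

/-- `P` is in general position: no three points collinear and no four points cocircular. -/
def GenPos (P : Finset E2) : Prop :=
  (∀ p ∈ P, ∀ q ∈ P, ∀ r ∈ P, p ≠ q → p ≠ r → q ≠ r →
      ¬ Collinear ℝ ({p, q, r} : Set E2)) ∧
  (∀ p ∈ P, ∀ q ∈ P, ∀ r ∈ P, ∀ s ∈ P,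
      p ≠ q → p ≠ r → p ≠ s → q ≠ r → q ≠ s → r ≠ s →
      ¬ ∃ c : E2, dist p c = dist q c ∧ dist p c = dist r c ∧ dist p c = dist s c)

section StmtHelpers
open scoped RealInnerProductSpace

private 
lemma expand2 (e₁ e₂ : E2) (h1 : ‖e₁‖ = 1) (h2 : ‖e₂‖ = 1) (h12 : ⟪e₁, e₂⟫ = 0)
    (z : E2) : z = ⟪z, e₁⟫ • e₁ + ⟪z, e₂⟫ • e₂ := by
  have h11 : ⟪e₁, e₁⟫ = 1 := by rw [real_inner_self_eq_norm_sq, h1]; norm_num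
  have h22 : ⟪e₂, e₂⟫ = 1 := by rw [real_inner_self_eq_norm_sq, h2]; norm_num
  have h21 : ⟪e₂, e₁⟫ = 0 := by rw [real_inner_comm]; exact h12
  have hon : Orthonormal ℝ ![e₁, e₂] := by
    rw [orthonormal_iff_ite]
    intro i j
    fin_cases i <;> fin_cases j
    · simpa using h11
    · simpa using h12
    · simpa using h21
    · simpa using h22
  have hcard : Fintype.card (Fin 2) = Module.finrank ℝ E2 := by
    simp [finrank_euclideanSpace_fin]
  have hb := coe_basisOfOrthonormalOfCardEqFinrank hon hcard
  have hz : z ∈ Submodule.span ℝ (Set.range ![e₁, e₂]) := by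
    rw [← hb, Module.Basis.span_eq]; trivial
  rw [Submodule.mem_span_range_iff_exists_fun] at hz
  obtain ⟨c, hc⟩ := hz
  rw [Fin.sum_univ_two] at hc
  simp only [Matrix.cons_val_zero, Matrix.cons_val_one, Matrix.head_cons] at hc
  have h₁ : ⟪z, e₁⟫ = c 0 := by
    rw [← hc]
    simp only [inner_add_left, real_inner_smul_left, h11, h21]
    ring
  have h₂ : ⟪z, e₂⟫ = c 1 := by
    rw [← hc]
    simp only [inner_add_left, real_inner_smul_left, h22, h12]
    ring
  rw [h₁, h₂, hc]

private 
lemma perp_of_equidist (p q c : E2) (h : dist p c = dist q c) :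
    ⟪c - (2:ℝ)⁻¹ • (p + q), q - p⟫ = 0 := by
  have h2 : ‖p - c‖ ^ 2 = ‖q - c‖ ^ 2 := by rw [← dist_eq_norm, ← dist_eq_norm, h]
  rw [norm_sub_sq_real, norm_sub_sq_real] at h2
  simp only [inner_sub_left, inner_sub_right, inner_add_left, inner_add_right,
    real_inner_smul_left, real_inner_self_eq_norm_sq] at *
  linarith [real_inner_comm p c, real_inner_comm q c, real_inner_comm p q]

private lemma frac_bound (r k hh s d u v a b : ℝ) (hr : 0 < r) (hk0 : 0 < k)
    (hhs : hh = r * s) (hh2 : hh ^ 2 = r ^ 2 - k) (hd2 : d ^ 2 = 4 * k)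
    (hA : r ^ 2 ≤ u ^ 2 + v ^ 2 - 2 * (hh * v) + hh ^ 2)
    (hB : r ^ 2 ≤ u ^ 2 + v ^ 2 + 2 * (hh * v) + hh ^ 2)
    (ha : 0 < a) (hb : 0 < b)
    (ha2 : a ^ 2 = u ^ 2 + v ^ 2 + d * u + k) (hb2 : b ^ 2 = u ^ 2 + v ^ 2 - d * u + k) :
    s ≤ (u ^ 2 + v ^ 2 - k) / (a * b) := by
  have hA' : 0 ≤ u ^ 2 + v ^ 2 - k - 2 * (hh * v) := by linarith
  have hB' : 0 ≤ u ^ 2 + v ^ 2 - k + 2 * (hh * v) := by linarith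
  have hSk : 0 ≤ u ^ 2 + v ^ 2 - k := by linarith
  have hhv : 4 * (r ^ 2 - k) * v ^ 2 = 4 * hh ^ 2 * v ^ 2 := by rw [hh2]
  have hprod2 : 4 * (r ^ 2 - k) * v ^ 2 ≤ (u ^ 2 + v ^ 2 - k) ^ 2 := by
    nlinarith [mul_nonneg hA' hB', hhv]
  have hprod_ab : (u ^ 2 + v ^ 2 + d * u + k) * (u ^ 2 + v ^ 2 - d * u + k)
      = (u ^ 2 + v ^ 2 + k) ^ 2 - 4 * k * u ^ 2 := by
    linear_combination (-(u ^ 2)) * hd2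
  have habsq : (hh * (a * b)) ^ 2 ≤ (r * (u ^ 2 + v ^ 2 - k)) ^ 2 := by
    have e1 : (hh * (a * b)) ^ 2 = hh ^ 2 * (a ^ 2 * b ^ 2) := by ring
    rw [e1, ha2, hb2, hprod_ab, hh2]
    have hkey : 0 ≤ k * ((u ^ 2 + v ^ 2 - k) ^ 2 - 4 * (r ^ 2 - k) * v ^ 2) :=
      mul_nonneg hk0.le (by linarith)
    nlinarith [hkey]
  have hab : hh * (a * b) ≤ r * (u ^ 2 + v ^ 2 - k) :=
    le_of_pow_le_pow_left₀ two_ne_zero (mul_nonneg hr.le hSk) habsq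
  rw [le_div_iff₀ (by positivity : (0:ℝ) < a * b)]
  rw [hhs] at hab
  nlinarith [hab, hr, mul_pos ha hb]

set_option maxHeartbeats 1000000 in
private lemma key_angle (β : ℝ) (hβ : 1 < β) (p q x c₁ c₂ : E2) (hpq : p ≠ q) (hc : c₁ ≠ c₂)
    (h₁p : dist p c₁ = β / 2 * dist p q) (h₁q : dist q c₁ = β / 2 * dist p q)
    (h₂p : dist p c₂ = β / 2 * dist p q) (h₂q : dist q c₂ = β / 2 * dist p q)
    (hx₁ : β / 2 * dist p q ≤ dist x c₁) (hx₂ : β / 2 * dist p q ≤ dist x c₂)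
    (hxp : x ≠ p) (hxq : x ≠ q) :
    ∠ p x q ≤ π / 2 - Real.arccos (1 / β) := by
  have hβ0 : (0:ℝ) < β := by linarith
  have hd : 0 < dist p q := dist_pos.2 hpq
  set d : ℝ := dist p q with hd_def
  set r : ℝ := β / 2 * d with hr_def
  have hr : 0 < r := by rw [hr_def]; positivity
  set k : ℝ := d ^ 2 / 4 with hk_def
  have hk0 : 0 < k := by rw [hk_def]; positivity
  have hd2 : d ^ 2 = 4 * k := by rw [hk_def]; ring
  set s : ℝ := Real.sqrt (1 - (1 / β) ^ 2) with hs_def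
  have hβinv : (0:ℝ) < 1 / β := by positivity
  have hβinv1 : 1 / β < 1 := by rw [div_lt_one hβ0]; exact hβ
  have hs2 : s ^ 2 = 1 - (1 / β) ^ 2 := by
    rw [hs_def]; exact Real.sq_sqrt (by nlinarith)
  have hs0 : 0 < s := by
    rw [hs_def]; apply Real.sqrt_pos.2; nlinarith
  set h : ℝ := r * s with hh_def
  have hh0 : 0 < h := mul_pos hr hs0
  have hh2 : h ^ 2 = r ^ 2 - k := by
    have hrk : r ^ 2 = β ^ 2 * k := by
      rw [hr_def, hk_def]; ring
    rw [hh_def, mul_pow, hs2, hrk]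
    field_simp
  set m : E2 := (2:ℝ)⁻¹ • (p + q) with hm_def
  set w : E2 := q - p with hw_def
  have hw : ‖w‖ = d := by rw [hw_def, hd_def, dist_eq_norm']
  have hpm : p - m = -((2:ℝ)⁻¹ • w) := by rw [hm_def, hw_def]; module
  have halfw : ‖(2:ℝ)⁻¹ • w‖ ^ 2 = k := by
    rw [norm_smul, hw, hk_def, Real.norm_eq_abs]
    rw [abs_of_pos (by norm_num : (0:ℝ) < 2⁻¹)]
    ring
  have hcenter : ∀ c : E2, dist p c = r → dist q c = r →
      ⟪c - m, w⟫ = 0 ∧ ‖c - m‖ ^ 2 = h ^ 2 := by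
    intro c hpc hqc
    have horth := perp_of_equidist p q c (hpc.trans hqc.symm)
    rw [← hm_def, ← hw_def] at horth
    refine ⟨horth, ?_⟩
    have h1 : ‖p - c‖ ^ 2 = r ^ 2 := by rw [← dist_eq_norm, hpc]
    have hpc' : p - c = (p - m) - (c - m) := by abel
    rw [hpc', hpm, norm_sub_sq_real] at h1
    have hi0 : ⟪-((2:ℝ)⁻¹ • w), c - m⟫ = 0 := by
      rw [inner_neg_left, real_inner_smul_left, real_inner_comm, horth]
      ring
    have hnw' : ‖-((2:ℝ)⁻¹ • w)‖ ^ 2 = k := by rw [norm_neg]; exact halfw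
    rw [hi0, hnw'] at h1
    rw [hh2]
    linarith
  obtain ⟨horth1, hn1⟩ := hcenter c₁ h₁p h₁q
  obtain ⟨horth2, hn2⟩ := hcenter c₂ h₂p h₂q
  set e₁ : E2 := d⁻¹ • w with he₁_def
  set e₂ : E2 := h⁻¹ • (c₁ - m) with he₂_def
  have hn1' : ‖c₁ - m‖ = h := by
    have h1 := Real.sqrt_sq hh0.le
    rw [← h1, ← hn1, Real.sqrt_sq (norm_nonneg _)]
  have he₁ : ‖e₁‖ = 1 := by
    rw [he₁_def, norm_smul, hw, Real.norm_eq_abs, abs_inv, abs_of_pos hd]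
    field_simp
  have he₂ : ‖e₂‖ = 1 := by
    rw [he₂_def, norm_smul, hn1', Real.norm_eq_abs, abs_inv, abs_of_pos hh0]
    field_simp
  have h12 : ⟪e₁, e₂⟫ = 0 := by
    rw [he₁_def, he₂_def, real_inner_smul_left, real_inner_smul_right, real_inner_comm, horth1]
    ring
  have hwe : w = d • e₁ := by
    rw [he₁_def, smul_smul, mul_inv_cancel₀ hd.ne', one_smul]
  have hne : c₁ - m = h • e₂ := by
    rw [he₂_def, smul_smul, mul_inv_cancel₀ hh0.ne', one_smul]
  have hn2e : c₂ - m = -(c₁ - m) := by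
    have hx2' := expand2 e₁ e₂ he₁ he₂ h12 (c₂ - m)
    have ha : ⟪c₂ - m, e₁⟫ = 0 := by
      rw [he₁_def, real_inner_smul_right, horth2]
      ring
    rw [ha, zero_smul, zero_add] at hx2'
    set b : ℝ := ⟪c₂ - m, e₂⟫ with hb_def
    have hbsq : b ^ 2 = h ^ 2 := by
      have hbb : ‖c₂ - m‖ ^ 2 = b ^ 2 := by
        rw [hx2', norm_smul, Real.norm_eq_abs, mul_pow, sq_abs, he₂]
        ring
      linarith [hn2]
    have hzero : (b - h) * (b + h) = 0 := by linear_combination hbsq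
    rcases mul_eq_zero.1 hzero with h' | h'
    · exfalso
      have hbh : b = h := by linarith
      rw [hbh, ← hne] at hx2'
      exact hc (sub_left_inj.1 hx2'.symm)
    · have hbh : b = -h := by linarith
      rw [hbh, neg_smul, ← hne] at hx2'
      exact hx2'
  set X : E2 := x - m with hX_def
  set u : ℝ := ⟪X, e₁⟫ with hu_def
  set v : ℝ := ⟪X, e₂⟫ with hv_def
  have hXe : X = u • e₁ + v • e₂ := expand2 e₁ e₂ he₁ he₂ h12 X
  have h21 : ⟪e₂, e₁⟫ = 0 := by rw [real_inner_comm]; exact h12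
  have h11 : ⟪e₁, e₁⟫ = 1 := by rw [real_inner_self_eq_norm_sq, he₁]; norm_num
  have h22 : ⟪e₂, e₂⟫ = 1 := by rw [real_inner_self_eq_norm_sq, he₂]; norm_num
  have hS : ‖X‖ ^ 2 = u ^ 2 + v ^ 2 := by
    rw [← real_inner_self_eq_norm_sq]
    nth_rewrite 1 [hXe]
    nth_rewrite 1 [hXe]
    simp only [inner_add_left, inner_add_right, real_inner_smul_left, real_inner_smul_right,
      h11, h22, h12, h21]
    ring
  have hXw : ⟪X, w⟫ = d * u := by
    rw [hwe, real_inner_smul_right, hu_def]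
  have hXn : ⟪X, c₁ - m⟫ = h * v := by
    rw [hne, real_inner_smul_right, hv_def]
  have hxc1 : x - c₁ = X - (c₁ - m) := by rw [hX_def]; abel
  have hxc2 : x - c₂ = X + (c₁ - m) := by
    have h1 : x - c₂ = X - (c₂ - m) := by rw [hX_def]; abel
    rw [h1, hn2e, sub_neg_eq_add]
  have hc1sq : r ^ 2 ≤ u ^ 2 + v ^ 2 - 2 * (h * v) + h ^ 2 := by
    have h1 : r ≤ ‖x - c₁‖ := by rw [← dist_eq_norm]; exact hx₁
    have h2 : r ^ 2 ≤ ‖x - c₁‖ ^ 2 := pow_le_pow_left₀ hr.le h1 2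
    rw [hxc1, norm_sub_sq_real, hXn, hS, hn1] at h2
    linarith
  have hc2sq : r ^ 2 ≤ u ^ 2 + v ^ 2 + 2 * (h * v) + h ^ 2 := by
    have h1 : r ≤ ‖x - c₂‖ := by rw [← dist_eq_norm]; exact hx₂
    have h2 : r ^ 2 ≤ ‖x - c₂‖ ^ 2 := pow_le_pow_left₀ hr.le h1 2
    rw [hxc2, norm_add_sq_real, hXn, hS, hn1] at h2
    linarith
  have hpx : p - x = -((2:ℝ)⁻¹ • w + X) := by rw [hX_def, hm_def, hw_def]; module
  have hqx : q - x = (2:ℝ)⁻¹ • w - X := by rw [hX_def, hm_def, hw_def]; module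
  have hhw : ⟪(2:ℝ)⁻¹ • w, X⟫ = 2⁻¹ * (d * u) := by
    rw [real_inner_smul_left, real_inner_comm, hXw]
  have hpxn : ‖p - x‖ ^ 2 = u ^ 2 + v ^ 2 + d * u + k := by
    rw [hpx, norm_neg, norm_add_sq_real, hhw, hS, halfw]
    ring
  have hqxn : ‖q - x‖ ^ 2 = u ^ 2 + v ^ 2 - d * u + k := by
    rw [hqx, norm_sub_sq_real, hhw, hS, halfw]
    ring
  have hinner : ⟪p - x, q - x⟫ = u ^ 2 + v ^ 2 - k := by
    have hpq' : ‖(p - x) - (q - x)‖ ^ 2 = d ^ 2 := by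
      have : (p - x) - (q - x) = -w := by rw [hw_def]; abel
      rw [this, norm_neg, hw]
    have hns := norm_sub_sq_real (p - x) (q - x)
    rw [hpq', hpxn, hqxn] at hns
    linarith [hd2]
  have hax : 0 < ‖p - x‖ := norm_pos_iff.2 (sub_ne_zero.2 (Ne.symm hxp))
  have hbx : 0 < ‖q - x‖ := norm_pos_iff.2 (sub_ne_zero.2 (Ne.symm hxq))
  clear_value d r k s h m w e₁ e₂ X u v
  have hfrac : s ≤ ⟪p - x, q - x⟫ / (‖p - x‖ * ‖q - x‖) := by
    rw [hinner]
    exact frac_bound r k h s d u v (‖p - x‖) (‖q - x‖) hr hk0 hh_def hh2 hd2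
      hc1sq hc2sq hax hbx hpxn hqxn
  have hang : ∠ p x q = Real.arccos (⟪p - x, q - x⟫ / (‖p - x‖ * ‖q - x‖)) := rfl
  rw [hang]
  have hmono : Real.arccos (⟪p - x, q - x⟫ / (‖p - x‖ * ‖q - x‖)) ≤ Real.arccos s := by
    rw [Real.arccos_eq_pi_div_two_sub_arcsin, Real.arccos_eq_pi_div_two_sub_arcsin]
    have := Real.monotone_arcsin hfrac
    linarith
  have hfin : Real.arccos s = π / 2 - Real.arccos (1 / β) := by
    have hθ : Real.arccos (1 / β) ≤ π / 2 := Real.arccos_le_pi_div_two.2 hβinv.le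
    have hθ0 : 0 ≤ Real.arccos (1 / β) := Real.arccos_nonneg _
    have hsin : s = Real.sin (Real.arccos (1 / β)) := by rw [Real.sin_arccos, hs_def]
    rw [hsin, Real.arccos_eq_pi_div_two_sub_arcsin,
      Real.arcsin_sin (by linarith) (by linarith)]
  linarith [hmono, hfin]

end StmtHelpers

/-- Let `pq` be an edge of the `β`-skeleton of a finite general-position set `P` (`β > 1`):
the union of the two closed disks of radius `(β/2)·‖pq‖` through both `p` and `q` contains no
point of `P \ {p, q}`. Then `pq` is a Delaunay edge of `P` and is `2θ`-stable for
`θ = arccos (1/β)`. In particular, for `β ≥ 1 + α²/4` (with the absolute constant `1/4`) and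
`α ∈ (0, π/2]`, every `β`-skeleton edge is `α`-stable. -/
theorem stmt_11 (P : Finset E2) (hgp : GenPos P) (β : ℝ) (hβ : 1 < β)
    (p q : E2) (hp : p ∈ P) (hq : q ∈ P) (hpq : p ≠ q)
    (c₁ c₂ : E2) (hc : c₁ ≠ c₂)
    (h₁p : dist p c₁ = β / 2 * dist p q) (h₁q : dist q c₁ = β / 2 * dist p q)
    (h₂p : dist p c₂ = β / 2 * dist p q) (h₂q : dist q c₂ = β / 2 * dist p q)
    (hempty : ∀ x ∈ P, x ≠ p → x ≠ q →
      x ∉ Metric.closedBall c₁ (β / 2 * dist p q) ∪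
            Metric.closedBall c₂ (β / 2 * dist p q)) :
    DelaunayEdge ↑P p q ∧
    StableEdge (2 * Real.arccos (1 / β)) ↑P p q ∧
    (∀ α : ℝ, 0 < α → α ≤ π / 2 → 1 + α ^ 2 / 4 ≤ β → StableEdge α ↑P p q) := by
  have hβ0 : (0:ℝ) < β := by linarith
  have hθpi2 : Real.arccos (1 / β) ≤ π / 2 := Real.arccos_le_pi_div_two.2 (by positivity)
  have hpP : p ∈ affineSpan ℝ ({p, q} : Set E2) := mem_affineSpan ℝ (by simp)
  have hqP : q ∈ affineSpan ℝ ({p, q} : Set E2) := mem_affineSpan ℝ (by simp)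
  have hout : ∀ x : E2, x ∈ P → x ≠ p → x ≠ q →
      β / 2 * dist p q ≤ dist x c₁ ∧ β / 2 * dist p q ≤ dist x c₂ := by
    intro x hx hxp hxq
    have hmem := hempty x hx hxp hxq
    rw [Set.mem_union, Metric.mem_closedBall, Metric.mem_closedBall] at hmem
    push_neg at hmem
    exact ⟨hmem.1.le, hmem.2.le⟩
  have hdel : DelaunayEdge ↑P p q := by
    refine ⟨hp, hq, hpq, c₁, h₁p.trans h₁q.symm, ?_⟩
    intro x hx
    rw [Finset.mem_coe] at hx
    by_cases hxp : x = p
    · rw [hxp]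
    · by_cases hxq : x = q
      · rw [hxq, h₁q, ← h₁p]
      · rw [h₁p]; exact (hout x hx hxp hxq).1
  have hangle : ∀ x : E2, x ∈ P → x ∉ affineSpan ℝ ({p, q} : Set E2) →
      ∠ p x q ≤ π / 2 - Real.arccos (1 / β) := by
    intro x hx hxs
    have hxp : x ≠ p := fun h => hxs (h ▸ hpP)
    have hxq : x ≠ q := fun h => hxs (h ▸ hqP)
    obtain ⟨hx1, hx2⟩ := hout x hx hxp hxq
    exact key_angle β hβ p q x c₁ c₂ hpq hc h₁p h₁q h₂p h₂q hx1 hx2 hxp hxq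
  have hstab : ∀ α : ℝ, α ≤ 2 * Real.arccos (1 / β) → StableEdge α ↑P p q := by
    intro α hα
    refine ⟨hdel, ?_, ?_⟩
    · intro x hx y hy hxy
      rw [Finset.mem_coe] at hx hy
      have h1 := hangle x hx hxy.2.1
      have h2 := hangle y hy hxy.2.2
      linarith
    · intro x hx hxs
      rw [Finset.mem_coe] at hx
      have h1 := hangle x hx hxs
      linarith
  refine ⟨hdel, hstab _ le_rfl, ?_⟩
  intro α hα0 hαpi hαβ
  apply hstab
  have hα2 : α ≤ 2 := by linarith [Real.pi_le_four]
  have hc8 : (0:ℝ) ≤ 1 - α ^ 2 / 8 := by nlinarith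
  have hcos : 1 / β ≤ Real.cos (α / 2) := by
    have h1 : 1 - (α / 2) ^ 2 / 2 ≤ Real.cos (α / 2) := Real.one_sub_sq_div_two_le_cos
    have h2 : 1 / β ≤ 1 - α ^ 2 / 8 := by
      rw [div_le_iff₀ hβ0]
      have h3 := mul_le_mul_of_nonneg_left hαβ hc8
      nlinarith [h3, mul_nonneg (mul_nonneg hα0.le hα0.le)
        (mul_nonneg (by linarith : (0:ℝ) ≤ 2 - α) (by linarith : (0:ℝ) ≤ 2 + α))]
    nlinarith [h1]
  have hmono : Real.arccos (Real.cos (α / 2)) ≤ Real.arccos (1 / β) := by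
    rw [Real.arccos_eq_pi_div_two_sub_arcsin, Real.arccos_eq_pi_div_two_sub_arcsin]
    have := Real.monotone_arcsin hcos
    linarith
  rw [Real.arccos_cos (by linarith) (by linarith [Real.pi_pos])] at hmono
  linarith
end

section
/- Let Q be a compact convex set with (cos α)·D_O ⊆ Q ⊆ D_O, α ∈ (0, π/22). Let p, q ∈ ℝ², u a direction, such that both disks D_{pq}(u−5α) and D_{pq}(u+5α) (centered on the rays from p in directions u−5α and u+5α and passing through p and q) exist. Then the homothetic copy Q_{pq}(u) of Q touching p and q with center on u[p] also exists; i.e., q does not lie in the open halfplane bounded by a supporting line of Q_p(u) at p and disjoint from Q_p(u). -/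
open Real
open scoped Pointwise

/-- Clockwise rotation of the direction `u ∈ ℂ ≅ ℝ²` by the angle `θ`. -/
noncomputable def rotCW (θ : ℝ) (u : ℂ) : ℂ := Complex.exp (-(θ : ℂ) * Complex.I) * u

/-- The homothetic copy of `Q ⊆ ℂ ≅ ℝ²` with center placed at `z` and scaling factor `lam`
(`Q` is regarded as centered at the origin). -/
noncomputable def homothet (Q : Set ℂ) (z : ℂ) (lam : ℝ) : Set ℂ := (fun w => z + (lam : ℂ) * w) '' Q

/-- The planar cross product: positive iff `b` lies (strictly) counterclockwise of `a`,
i.e. iff `b` is to the left of the directed line along `a`. -/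
noncomputable def cross2 (a b : ℂ) : ℝ := a.re * b.im - a.im * b.re

/-!
Put `w = q - p`. The disk `D_{pq}(v)` exists iff `⟪w, v⟫ > 0`, so `w` lies in the cone of
half-angle `π/2 - 5α ≤ π/2 - α` around `u`; that cone is swept by the balls
`B(t u, t cos α)`, `t ≥ 0`. With `g` the gauge of `Q`, a point `x` is on the boundary of
`z + λ Q` iff `g (x - z) = λ`, so we need `t > 0` with `g (w - t u) = g (-t u)`. Since
`‖·‖ ≤ g ≤ ‖·‖ / cos α`, the continuous function `t ↦ g (w - t u) - g (-t u)` is positive at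
`0` and nonpositive at a `t₀` with `w ∈ B(t₀ u, t₀ cos α)`; the intermediate value theorem
gives `t`.
-/

open scoped RealInnerProductSpace

section InnerProductSpace

variable {E : Type*} [NormedAddCommGroup E] [InnerProductSpace ℝ E]

theorem inner_pos_of_norm_sub_smul_eq {v w : E} {r : ℝ} (hv : ‖v‖ = 1) (hr : 0 < r)
    (hw : w ≠ 0) (h : ‖w - r • v‖ = r) : 0 < ⟪w, v⟫ := by
  have key : 2 * r * ⟪w, v⟫ = ‖w‖ ^ 2 := by
    have := norm_sub_sq_real w (r • v)
    rw [h, inner_smul_right, norm_smul, hv, Real.norm_of_nonneg hr.le] at this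
    linarith
  have : 0 < ‖w‖ ^ 2 := by positivity
  nlinarith

theorem exists_norm_sub_smul_le_of_sin_mul_norm_le {u w : E} (hu : ‖u‖ = 1) {α : ℝ}
    (hs : 0 < sin α) (hc : 0 ≤ cos α) (h : sin α * ‖w‖ ≤ ⟪w, u⟫) :
    ∃ t, 0 ≤ t ∧ ‖w - t • u‖ ≤ t * cos α := by
  have hd : 0 ≤ ⟪w, u⟫ := le_trans (by positivity) h
  obtain ⟨t, hts⟩ : ∃ t, sin α ^ 2 * t = ⟪w, u⟫ := ⟨_, mul_div_cancel₀ _ (by positivity)⟩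
  have ht₀ : 0 ≤ t := (mul_nonneg_iff_of_pos_left (by positivity)).1 (hts ▸ hd)
  refine ⟨t, ht₀, (sq_le_sq₀ (norm_nonneg _) (by positivity)).1 ?_⟩
  have hsq : sin α ^ 2 * ‖w‖ ^ 2 ≤ ⟪w, u⟫ ^ 2 := by
    rw [← mul_pow]; exact pow_le_pow_left₀ (by positivity) h 2
  have hw : ‖w‖ ^ 2 ≤ sin α ^ 2 * t ^ 2 := by
    rw [← hts] at hsq
    nlinarith [pow_pos hs 2]
  have hpyth : t ^ 2 * cos α ^ 2 = t ^ 2 - sin α ^ 2 * t ^ 2 := by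
    rw [cos_sq']; ring
  rw [norm_sub_sq_real, inner_smul_right, norm_smul, hu, Real.norm_of_nonneg ht₀, ← hts]
  linear_combination hw - hpyth

end InnerProductSpace

theorem sin_mul_le_of_cos_mul_add_sin_mul_pos {α θ d c W : ℝ} (hα : 0 ≤ α) (hαθ : α ≤ θ)
    (hθ : θ < π / 2) (hW : W ^ 2 = d ^ 2 + c ^ 2)
    (h₁ : 0 < cos θ * d + sin θ * c) (h₂ : 0 < cos θ * d - sin θ * c) : sin α * W ≤ d := by
  have hcθ : 0 < cos θ := cos_pos_of_mem_Ioo ⟨by linarith, hθ⟩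
  have hcα : 0 ≤ cos α := cos_nonneg_of_mem_Icc ⟨by linarith, by linarith⟩
  have hsα : 0 ≤ sin α := sin_nonneg_of_nonneg_of_le_pi hα (by linarith)
  have hd : 0 < d := by nlinarith
  have htan : sin α * cos θ ≤ cos α * sin θ := by
    have := sin_nonneg_of_nonneg_of_le_pi (sub_nonneg.2 hαθ) (by linarith)
    rw [sin_sub] at this; linarith
  have hc : sin α * |c| ≤ cos α * d := by
    have hsc : sin θ * |c| < cos θ * d := by
      rcases abs_cases c with ⟨h, _⟩ | ⟨h, _⟩ <;> rw [h] <;> linarith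
    refine le_of_mul_le_mul_left ?_ hcθ
    calc cos θ * (sin α * |c|) = (sin α * cos θ) * |c| := by ring
      _ ≤ (cos α * sin θ) * |c| := by gcongr
      _ = cos α * (sin θ * |c|) := by ring
      _ ≤ cos α * (cos θ * d) := by gcongr
      _ = cos θ * (cos α * d) := by ring
  have : (sin α * W) ^ 2 ≤ d ^ 2 := by
    have := pow_le_pow_left₀ (by positivity) hc 2
    rw [mul_pow, sq_abs, mul_pow] at this
    rw [mul_pow, hW]
    nlinarith [sin_sq_add_cos_sq α]
  exact abs_le_of_sq_le_sq' this hd.le |>.2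

section Gauge

variable {E : Type*} [NormedAddCommGroup E] [NormedSpace ℝ E]

theorem gauge_le_norm_div_of_closedBall_subset {s : Set E} {r : ℝ} (hr : 0 < r)
    (h : Metric.closedBall 0 r ⊆ s) (x : E) : gauge s x ≤ ‖x‖ / r := by
  simpa [gauge_closedBall hr.le] using
    gauge_mono (absorbent_nhds_zero (Metric.closedBall_mem_nhds 0 hr)) h x

theorem exists_pos_gauge_sub_smul_eq {s : Set E} (hc : Convex ℝ s) (hs : s ∈ nhds 0)
    {u w : E} {t₀ : ℝ} (hw : 0 < gauge s w) (ht₀ : 0 ≤ t₀)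
    (h : gauge s (w - t₀ • u) ≤ gauge s (-(t₀ • u))) :
    ∃ t : ℝ, 0 < t ∧ gauge s (w - t • u) = gauge s (-(t • u)) := by
  set F : ℝ → ℝ := fun t => gauge s (w - t • u) - gauge s (-(t • u))
  have hF : Continuous F := by
    have := continuous_gauge hc hs
    unfold F; fun_prop
  obtain ⟨t, ht, hFt⟩ : (0 : ℝ) ∈ F '' Set.Icc 0 t₀ :=
    intermediate_value_Icc' ht₀ hF.continuousOn ⟨by simpa [F] using h, by simpa [F] using hw.le⟩
  refine ⟨t, ht.1.lt_of_ne ?_, sub_eq_zero.1 hFt⟩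
  rintro rfl
  exact hw.ne' (by simpa [F] using hFt)

end Gauge

theorem norm_rotCW (θ : ℝ) (u : ℂ) : ‖rotCW θ u‖ = ‖u‖ := by
  rw [rotCW, norm_mul, show -(θ : ℂ) * Complex.I = ((-θ : ℝ) : ℂ) * Complex.I by push_cast; ring,
    Complex.norm_exp_ofReal_mul_I, one_mul]

theorem inner_rotCW (w u : ℂ) (θ : ℝ) :
    ⟪w, rotCW θ u⟫ = cos θ * ⟪w, u⟫ - sin θ * ⟪w, Complex.I * u⟫ := by
  have : rotCW θ u = cos θ • u - sin θ • (Complex.I * u) := by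
    apply Complex.ext <;>
      simp [rotCW, Complex.exp_re, Complex.exp_im, Complex.cos_ofReal_re, Complex.sin_ofReal_re]
    ring
  rw [this, inner_sub_right, inner_smul_right, inner_smul_right]

theorem inner_sq_add_inner_I_mul_sq {u : ℂ} (hu : ‖u‖ = 1) (w : ℂ) :
    ⟪w, u⟫ ^ 2 + ⟪w, Complex.I * u⟫ ^ 2 = ‖w‖ ^ 2 :=
  calc ⟪w, u⟫ ^ 2 + ⟪w, Complex.I * u⟫ ^ 2 = ‖u * (starRingEnd ℂ) w‖ ^ 2 := by
        rw [Complex.inner, Complex.inner, mul_assoc, Complex.I_mul_re, Complex.sq_norm,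
          Complex.normSq_apply]
        ring
    _ = ‖w‖ ^ 2 := by rw [norm_mul, Complex.norm_conj, hu, one_mul]

theorem mem_frontier_homothet_iff {Q : Set ℂ} (hc : Convex ℝ Q) (hQ : Q ∈ nhds 0) {lam : ℝ}
    (hlam : 0 < lam) (z x : ℂ) : x ∈ frontier (homothet Q z lam) ↔ gauge Q (x - z) = lam := by
  have hlam' : (lam : ℂ) ≠ 0 := by exact_mod_cast hlam.ne'
  let h : ℂ ≃ₜ ℂ := (Homeomorph.mulLeft₀ (lam : ℂ) hlam').trans (Homeomorph.addLeft z)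
  have hh : homothet Q z lam = h '' Q := rfl
  rw [hh, ← h.image_frontier, h.image_eq_preimage_symm, Set.mem_preimage,
    ← gauge_eq_one_iff_mem_frontier hc hQ]
  have : h.symm x = (lam⁻¹ : ℝ) • (x - z) := by
    rw [Homeomorph.symm_apply_eq]
    change x = z + (lam : ℂ) * ((lam⁻¹ : ℝ) • (x - z))
    rw [Complex.real_smul, Complex.ofReal_inv, mul_inv_cancel_left₀ hlam', add_sub_cancel]
  rw [this, gauge_smul_of_nonneg (inv_nonneg.2 hlam.le), smul_eq_mul, inv_mul_eq_one₀ hlam.ne',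
    eq_comm]

theorem sin_mul_norm_le_inner_of_norm_sub_smul_rotCW_eq {u w : ℂ} (hu : ‖u‖ = 1) (hw : w ≠ 0)
    {α θ r₁ r₂ : ℝ} (hα : 0 ≤ α) (hαθ : α ≤ θ) (hθ : θ < π / 2) (hr₁ : 0 < r₁) (hr₂ : 0 < r₂)
    (h₁ : ‖w - r₁ • rotCW (-θ) u‖ = r₁) (h₂ : ‖w - r₂ • rotCW θ u‖ = r₂) :
    sin α * ‖w‖ ≤ ⟪w, u⟫ := by
  have h₁ := inner_pos_of_norm_sub_smul_eq (by rw [norm_rotCW, hu]) hr₁ hw h₁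
  have h₂ := inner_pos_of_norm_sub_smul_eq (by rw [norm_rotCW, hu]) hr₂ hw h₂
  rw [inner_rotCW, cos_neg, sin_neg, neg_mul, sub_neg_eq_add] at h₁
  rw [inner_rotCW] at h₂
  exact sin_mul_le_of_cos_mul_add_sin_mul_pos hα hαθ hθ (inner_sq_add_inner_I_mul_sq hu w).symm
    h₁ h₂

theorem exists_frontier_homothet_of_norm_sub_smul_le {Q : Set ℂ} (hQ : Convex ℝ Q) {c : ℝ}
    (hc : 0 < c) (hsub : Metric.closedBall 0 c ⊆ Q) (hsup : Q ⊆ Metric.closedBall 0 1)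
    {p q u : ℂ} (hu : ‖u‖ = 1) (hpq : p ≠ q) {t₀ : ℝ} (ht₀ : 0 ≤ t₀)
    (hq : ‖q - p - t₀ • u‖ ≤ t₀ * c) :
    ∃ t lam : ℝ, 0 < t ∧ 0 < lam ∧
      p ∈ frontier (homothet Q (p + t • u) lam) ∧ q ∈ frontier (homothet Q (p + t • u) lam) := by
  have hQ0 : Q ∈ nhds 0 := Filter.mem_of_superset (Metric.closedBall_mem_nhds 0 hc) hsub
  have norm_le_gauge (x : ℂ) : ‖x‖ ≤ gauge Q x := by
    simpa using le_gauge_of_subset_closedBall (absorbent_nhds_zero hQ0) zero_le_one hsup (x := x)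
  have norm_neg_smul {t : ℝ} (ht : 0 ≤ t) : ‖-(t • u)‖ = t := by
    rw [norm_neg, norm_smul, hu, mul_one, Real.norm_of_nonneg ht]
  have hgauge_pos : 0 < gauge Q (q - p) :=
    (norm_pos_iff.2 (sub_ne_zero.2 hpq.symm)).trans_le (norm_le_gauge _)
  obtain ⟨t, ht, heq⟩ := exists_pos_gauge_sub_smul_eq hQ hQ0 hgauge_pos ht₀ <|
    calc gauge Q (q - p - t₀ • u) ≤ ‖q - p - t₀ • u‖ / c :=
          gauge_le_norm_div_of_closedBall_subset hc hsub _
      _ ≤ t₀ := (div_le_iff₀ hc).2 hq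
      _ = ‖-(t₀ • u)‖ := (norm_neg_smul ht₀).symm
      _ ≤ gauge Q (-(t₀ • u)) := norm_le_gauge _
  have hlam : 0 < gauge Q (-(t • u)) :=
    ((norm_neg_smul ht.le).symm ▸ ht).trans_le (norm_le_gauge _)
  refine ⟨t, _, ht, hlam, ?_, ?_⟩ <;> rw [mem_frontier_homothet_iff hQ hQ0 hlam]
  · rw [sub_add_cancel_left]
  · rw [← sub_sub, heq]

theorem stmt_13_general (α : ℝ) (hα : α ∈ Set.Ioo 0 (π / 22))
    (Q : Set ℂ) (hQconv : Convex ℝ Q)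
    (hsub : Real.cos α • Metric.closedBall (0 : ℂ) 1 ⊆ Q)
    (hsup : Q ⊆ Metric.closedBall (0 : ℂ) 1)
    (p q : ℂ) (hpq : p ≠ q) (u : ℂ) (hu : ‖u‖ = 1)
    (r₁ r₂ : ℝ) (hr₁ : 0 < r₁) (hr₂ : 0 < r₂)
    (hD₁ : dist q (p + r₁ • rotCW (-(5 * α)) u) = r₁)
    (hD₂ : dist q (p + r₂ • rotCW (5 * α) u) = r₂) :
    ∃ t lam : ℝ, 0 < t ∧ 0 < lam ∧
      p ∈ frontier (homothet Q (p + t • u) lam) ∧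
      q ∈ frontier (homothet Q (p + t • u) lam) := by
  obtain ⟨hα₀, hα⟩ := hα
  have hcos : 0 < cos α := cos_pos_of_mem_Ioo ⟨by linarith, by linarith⟩
  rw [smul_unitClosedBall_of_nonneg hcos.le] at hsub
  rw [dist_eq_norm, ← sub_sub] at hD₁ hD₂
  have hcone : sin α * ‖q - p‖ ≤ ⟪q - p, u⟫ :=
    sin_mul_norm_le_inner_of_norm_sub_smul_rotCW_eq hu (sub_ne_zero.2 hpq.symm) hα₀.le
      (by linarith) (by linarith) hr₁ hr₂ hD₁ hD₂
  obtain ⟨t₀, ht₀, hq⟩ := exists_norm_sub_smul_le_of_sin_mul_norm_le hu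
    (sin_pos_of_pos_of_lt_pi hα₀ (by linarith)) hcos.le hcone
  exact exists_frontier_homothet_of_norm_sub_smul_le hQconv hcos hsub hsup hu hpq ht₀ hq

/-- Existence step (i) in the proof of Theorem 1.1(i): let `Q` be compact convex with
`(cos α) • D_O ⊆ Q ⊆ D_O`, `α ∈ (0, π/22)`. If both Euclidean disks `D_{pq}(u−5α)` and
`D_{pq}(u+5α)` (through `p` and `q`, centered on the rays from `p` in the directions obtained
from `u` by rotating by `∓5α`) exist, then the homothetic copy `Q_{pq}(u)` of `Q` touching `p`
and `q` with center on the ray `u[p]` also exists. -/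
theorem stmt_13 (α : ℝ) (hα : α ∈ Set.Ioo 0 (π / 22))
    (Q : Set ℂ) (hQc : IsCompact Q) (hQconv : Convex ℝ Q)
    (hsub : Real.cos α • Metric.closedBall (0 : ℂ) 1 ⊆ Q)
    (hsup : Q ⊆ Metric.closedBall (0 : ℂ) 1)
    (p q : ℂ) (hpq : p ≠ q) (u : ℂ) (hu : ‖u‖ = 1)
    (r₁ r₂ : ℝ) (hr₁ : 0 < r₁) (hr₂ : 0 < r₂)
    (hD₁ : dist q (p + r₁ • rotCW (-(5 * α)) u) = r₁)
    (hD₂ : dist q (p + r₂ • rotCW (5 * α) u) = r₂) :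
    ∃ t lam : ℝ, 0 < t ∧ 0 < lam ∧
      p ∈ frontier (homothet Q (p + t • u) lam) ∧
      q ∈ frontier (homothet Q (p + t • u) lam) :=
  stmt_13_general α hα Q hQconv hsub hsup p q hpq u hu r₁ r₂ hr₁ hr₂ hD₁ hD₂
end

section
/- Let D and D⁺ be closed disks both having p on their boundary, with centers on a common ray u[p] from p, with D ⊆ D⁺, and let q ∈ ∂D ∩ int D⁺. Let ℓ′ be any line through q. Then the chord D ∩ ℓ′ is contained in the chord D⁺ ∩ ℓ′; moreover, the angle between ℓ′ and the tangent to D at q equals the inscribed angle at which p sees the chord D ∩ ℓ′, and this angle is at most the angle at which p sees the chord D⁺ ∩ ℓ′. -/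
open Real EuclideanGeometry
open scoped RealInnerProductSpace

/-!
`D ⊆ D⁺` because the centres are `r' - r` apart, so a point of `ℓ'` in `D` is a point of `ℓ'` in
`D⁺` and, by strict convexity, lies between the two points `a`, `b` where `ℓ'` meets `∂D⁺`. Hence
`q, q' ∈ [a, b]`, and an angle at `p` subtending a subsegment of `[a, b]` is at most `∠ a p b`.

For the tangent–chord equality work in the orthonormal frame `e₁ = (q - c) / r`, `e₂ = τ / ‖τ‖`:
writing `q' - c = (A, B)`, both `cos ∠ q' p q` and the cosine of the angle between `qq'` and `τ`
equal `B / ‖q' - q‖`. Their squares agree by an identity on the circle, and the side condition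
on `τ` gives them the same sign.
-/

section AngleMonotone

variable {V P : Type*} [NormedAddCommGroup V] [InnerProductSpace ℝ V] [MetricSpace P]
  [NormedAddTorsor V P]

theorem angle_le_angle_of_wbtw {a x c : P} (p : P) (h : Wbtw ℝ a x c) : ∠ a p x ≤ ∠ a p c := by
  rcases eq_or_ne p a with rfl | hpa
  · simp
  rcases eq_or_ne p c with rfl | hpc
  · rcases eq_or_ne x p with rfl | hxp
    · rfl
    · rw [h.angle₁₃₂_eq_zero_of_ne hxp]
      exact angle_nonneg _ _ _
  rw [← angle_add_of_ne_of_ne hpa hpc h]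
  exact le_add_of_nonneg_right (angle_nonneg _ _ _)

theorem angle_le_angle_of_wbtw_of_wbtw {a b x y : P} (p : P) (hx : Wbtw ℝ a x b)
    (hy : Wbtw ℝ a y b) : ∠ x p y ≤ ∠ a p b := by
  wlog hxy : Wbtw ℝ a x y generalizing x y
  · have hray : SameRay ℝ (x -ᵥ a) (y -ᵥ a) := by
      refine hx.sameRay_vsub_left.trans hy.sameRay_vsub_left.symm fun hba => Or.inl ?_
      rw [vsub_eq_zero_iff_eq] at hba ⊢
      subst hba
      exact (wbtw_self_iff ℝ).1 hx
    rw [angle_comm]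
    exact this hy hx ((wbtw_total_of_sameRay_vsub_left hray).resolve_left hxy)
  calc ∠ x p y ≤ ∠ x p b := angle_le_angle_of_wbtw p (hy.trans_left_right hxy)
    _ = ∠ b p x := angle_comm _ _ _
    _ ≤ ∠ b p a := angle_le_angle_of_wbtw p hx.symm
    _ = ∠ a p b := angle_comm _ _ _

end AngleMonotone

theorem eq_of_sq_eq_sq_of_mul_nonneg {R : Type*} [CommRing R] [LinearOrder R]
    [IsStrictOrderedRing R] {x y : R} (h : x ^ 2 = y ^ 2) (hxy : 0 ≤ x * y) : x = y := by
  rcases sq_eq_sq_iff_eq_or_eq_neg.1 h with h | rfl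
  · exact h
  · have : y = 0 := by nlinarith [sq_nonneg y]
    simp [this]

/-- Coordinates: `q = (r, 0)`, `q' = (A, B)` and `p = (X, Y)` lie on the circle of radius `r`
about the origin, `n₁ = |pq'|`, `n₂ = |pq|`, `n₃ = |qq'|`, and `hside` says that `p` is not on the
same side of the line `qq'` as the tangent direction `(0, 1)`. The conclusion is
`cos ∠ q' p q = B / n₃`. -/
theorem tangent_chord_coords {r A B X Y n₁ n₂ n₃ : ℝ} (hr : 0 ≤ r)
    (hAB : A ^ 2 + B ^ 2 = r ^ 2) (hXY : X ^ 2 + Y ^ 2 = r ^ 2)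
    (hn₁ : n₁ ^ 2 = (A - X) ^ 2 + (B - Y) ^ 2) (hn₂ : n₂ ^ 2 = (r - X) ^ 2 + Y ^ 2)
    (hn₃ : n₃ ^ 2 = (A - r) ^ 2 + B ^ 2) (hn₁0 : 0 ≤ n₁) (hn₂0 : 0 ≤ n₂) (hn₃0 : 0 ≤ n₃)
    (hside : 0 ≤ (r - A) * (B * (r - X) - (r - A) * Y)) :
    ((A - X) * (r - X) - (B - Y) * Y) * n₃ = B * (n₁ * n₂) := by
  have hL : (A - X) * (r - X) - (B - Y) * Y = (r + A) * (r - X) - B * Y := by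
    linear_combination hXY
  rw [hL]
  have hLB : ((r + A) * (r - X) - B * Y) * B = (B * (r - X) - (r - A) * Y) * (r + A) := by
    linear_combination (-Y) * hAB
  have hLK : (r - A) * ((r + A) * (r - X) - B * Y) ^ 2
      = (r + A) * (B * (r - X) - (r - A) * Y) ^ 2 := by
    linear_combination ((r - A) * Y ^ 2 - (r + A) * (r - X) ^ 2) * hAB
  -- `hLK` gives the squares of both sides, `hLB` their common sign
  refine eq_of_sq_eq_sq_of_mul_nonneg ?_ ?_
  · rw [mul_pow, mul_pow, mul_pow, hn₁, hn₂, hn₃]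
    linear_combination (r - A) * hLK - (B * (r - X) - (r - A) * Y) ^ 2 * hAB
      - B ^ 2 * (2 * ((r + A) * (r - X) - B * Y) + (X ^ 2 + Y ^ 2 - r ^ 2)) * hXY
  · obtain ⟨hAr, hrA⟩ := abs_le_of_sq_le_sq' (show A ^ 2 ≤ r ^ 2 by nlinarith) hr
    rcases hrA.eq_or_lt with rfl | hrA
    · have hB : B = 0 := by nlinarith
      simp [hB]
    · have hK := nonneg_of_mul_nonneg_right hside (sub_pos.2 hrA)
      have : 0 ≤ ((r + A) * (r - X) - B * Y) * B := by
        rw [hLB]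
        exact mul_nonneg hK (by linarith)
      calc (0 : ℝ) ≤ ((r + A) * (r - X) - B * Y) * B * (n₁ * n₂ * n₃) := by positivity
        _ = _ := by ring

section Plane

variable {V : Type*} [NormedAddCommGroup V] [InnerProductSpace ℝ V]

theorem orthonormal_normalize_pair {v w : V} (hv : v ≠ 0) (hw : w ≠ 0) (h : ⟪v, w⟫ = 0) :
    Orthonormal ℝ ![‖v‖⁻¹ • v, ‖w‖⁻¹ • w] := by
  have h' : ⟪w, v⟫ = 0 := by rw [real_inner_comm]; exact h
  rw [orthonormal_iff_ite]
  intro i j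
  fin_cases i <;> fin_cases j <;>
    simp [real_inner_smul_left, real_inner_smul_right, norm_smul, h, h', hv, hw]

theorem real_inner_eq_of_orthonormal_fin_two [Fact (Module.finrank ℝ V = 2)] {e₁ e₂ : V}
    (he : Orthonormal ℝ ![e₁, e₂]) (x y : V) :
    ⟪x, y⟫ = ⟪x, e₁⟫ * ⟪y, e₁⟫ + ⟪x, e₂⟫ * ⟪y, e₂⟫ := by
  have hcard : Fintype.card (Fin 2) = Module.finrank ℝ V := by
    simp [(Fact.out : Module.finrank ℝ V = 2)]
  have hb := coe_basisOfOrthonormalOfCardEqFinrank he hcard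
  let b := (basisOfOrthonormalOfCardEqFinrank he hcard).toOrthonormalBasis (by rw [hb]; exact he)
  have hb' : ⇑b = ![e₁, e₂] := by simp [b, hb]
  rw [← b.sum_inner_mul_inner, Fin.sum_univ_two, hb']
  simp [real_inner_comm]

theorem angle_eq_angle_of_inner_mul_eq {x y z w : V} (hx : x ≠ 0) (hy : y ≠ 0) (hz : z ≠ 0)
    (hw : w ≠ 0) (h : ⟪x, y⟫ * (‖z‖ * ‖w‖) = ⟪z, w⟫ * (‖x‖ * ‖y‖)) :
    InnerProductGeometry.angle x y = InnerProductGeometry.angle z w := by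
  rw [InnerProductGeometry.angle, InnerProductGeometry.angle]
  congr 1
  rw [div_eq_div_iff (by positivity) (by positivity), h]

theorem inscribed_angle_eq_tangent_chord_angle_of_orthonormal [Fact (Module.finrank ℝ V = 2)]
    {p q q' c τ e₁ e₂ : V} {r s : ℝ} (he : Orthonormal ℝ ![e₁, e₂]) (hr : 0 ≤ r) (hs : 0 < s)
    (hp : ‖p - c‖ = r) (hq : q - c = r • e₁) (hq' : ‖q' - c‖ = r) (hτ : τ = s • e₂)
    (hpq : p ≠ q) (hpq' : p ≠ q') (hqq' : q ≠ q')
    (hside : ⟪τ, (p - q) - (⟪p - q, q' - q⟫ / ‖q' - q‖ ^ 2) • (q' - q)⟫ ≤ 0) :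
    ∠ q' p q = InnerProductGeometry.angle (q' - q) τ := by
  have h₁ : ‖e₁‖ = 1 := he.1 0
  have h₂ : ‖e₂‖ = 1 := he.1 1
  have h₁₂ : ⟪e₁, e₂⟫ = 0 := he.2 (by decide : (0 : Fin 2) ≠ 1)
  have h₂₁ : ⟪e₂, e₁⟫ = 0 := he.2 (by decide : (1 : Fin 2) ≠ 0)
  have hinner := real_inner_eq_of_orthonormal_fin_two he
  have hnorm : ∀ x, ‖x‖ ^ 2 = ⟪x, e₁⟫ ^ 2 + ⟪x, e₂⟫ ^ 2 := fun x => by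
    rw [← real_inner_self_eq_norm_sq, hinner]
    ring
  have hcoord : ∀ (x y : V) (e : V), ⟪x - y, e⟫ = ⟪x - c, e⟫ - ⟪y - c, e⟫ := fun x y e => by
    rw [← inner_sub_left, sub_sub_sub_cancel_right]
  have hq₁ : ⟪q - c, e₁⟫ = r := by
    rw [hq, real_inner_smul_left, real_inner_self_eq_norm_sq, h₁, one_pow, mul_one]
  have hq₂ : ⟪q - c, e₂⟫ = 0 := by rw [hq, real_inner_smul_left, h₁₂, mul_zero]
  have hτ₁ : ⟪τ, e₁⟫ = 0 := by rw [hτ, real_inner_smul_left, h₂₁, mul_zero]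
  have hτ₂ : ⟪τ, e₂⟫ = s := by
    rw [hτ, real_inner_smul_left, real_inner_self_eq_norm_sq, h₂, one_pow, mul_one]
  set A := ⟪q' - c, e₁⟫
  set B := ⟪q' - c, e₂⟫
  set X := ⟪p - c, e₁⟫
  set Y := ⟪p - c, e₂⟫
  have hAB : A ^ 2 + B ^ 2 = r ^ 2 := by rw [← hnorm, hq']
  have hXY : X ^ 2 + Y ^ 2 = r ^ 2 := by rw [← hnorm, hp]
  have hq'p₁ : ⟪q' - p, e₁⟫ = A - X := hcoord _ _ _
  have hq'p₂ : ⟪q' - p, e₂⟫ = B - Y := hcoord _ _ _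
  have hqp₁ : ⟪q - p, e₁⟫ = r - X := by rw [hcoord, hq₁]
  have hqp₂ : ⟪q - p, e₂⟫ = -Y := by rw [hcoord, hq₂, zero_sub]
  have hq'q₁ : ⟪q' - q, e₁⟫ = A - r := by rw [hcoord, hq₁]
  have hq'q₂ : ⟪q' - q, e₂⟫ = B := by rw [hcoord, hq₂, sub_zero]
  have hpq₁ : ⟪p - q, e₁⟫ = X - r := by rw [hcoord, hq₁]
  have hpq₂ : ⟪p - q, e₂⟫ = Y := by rw [hcoord, hq₂, sub_zero]
  have hn₃ : ‖q' - q‖ ^ 2 = (A - r) ^ 2 + B ^ 2 := by rw [hnorm, hq'q₁, hq'q₂]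
  have hside' : 0 ≤ (r - A) * (B * (r - X) - (r - A) * Y) := by
    have hn₃pos : 0 < (A - r) ^ 2 + B ^ 2 := hn₃ ▸ by positivity [sub_ne_zero.2 hqq'.symm]
    rw [inner_sub_right, real_inner_smul_right, hinner τ (p - q), hinner τ (q' - q),
      hinner (p - q) (q' - q), hpq₁, hpq₂, hq'q₁, hq'q₂, hτ₁, hτ₂, hn₃, div_mul_eq_mul_div,
      sub_nonpos, le_div_iff₀ hn₃pos] at hside
    exact nonneg_of_mul_nonneg_right (by linear_combination hside) hs
  have hkey := tangent_chord_coords hr hAB hXY (by rw [hnorm, hq'p₁, hq'p₂])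
    (by rw [hnorm, hqp₁, hqp₂, neg_sq]) hn₃ (norm_nonneg _) (norm_nonneg _) (norm_nonneg _) hside'
  have hτs : ‖τ‖ = s := by rw [hτ, norm_smul, h₂, mul_one, Real.norm_of_nonneg hs.le]
  refine angle_eq_angle_of_inner_mul_eq (sub_ne_zero.2 hpq'.symm) (sub_ne_zero.2 hpq.symm)
    (sub_ne_zero.2 hqq'.symm) (norm_pos_iff.1 (hτs ▸ hs)) ?_
  rw [vsub_eq_sub, vsub_eq_sub, hinner (q' - p), hinner (q' - q), hq'p₁, hq'p₂, hqp₁, hqp₂, hq'q₁,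
    hq'q₂, hτ₁, hτ₂, hτs]
  linear_combination s * hkey

theorem inscribed_angle_eq_tangent_chord_angle [Fact (Module.finrank ℝ V = 2)]
    {p q q' c τ : V} {r : ℝ} (hp : dist p c = r) (hq : dist q c = r) (hq' : dist q' c = r)
    (hpq : p ≠ q) (hpq' : p ≠ q') (hqq' : q ≠ q') (hτ : τ ≠ 0) (hτq : ⟪τ, q - c⟫ = 0)
    (hside : ⟪τ, (p - q) - (⟪p - q, q' - q⟫ / ‖q' - q‖ ^ 2) • (q' - q)⟫ ≤ 0) :
    ∠ q' p q = InnerProductGeometry.angle (q' - q) τ := by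
  rw [dist_eq_norm] at hp hq hq'
  have hqc : q - c ≠ 0 := by
    intro hqc
    obtain rfl := sub_eq_zero.1 hqc
    rw [sub_self, norm_zero] at hq
    exact hpq (sub_eq_zero.1 (norm_eq_zero.1 (hp.trans hq.symm)))
  have hr : 0 < r := hq ▸ norm_pos_iff.2 hqc
  refine inscribed_angle_eq_tangent_chord_angle_of_orthonormal
    (orthonormal_normalize_pair hqc hτ (by rw [real_inner_comm]; exact hτq)) hr.le
    (norm_pos_iff.2 hτ) hp ?_ hq' ?_ hpq hpq' hqq' hside
  · rw [smul_smul, hq, mul_inv_cancel₀ hr.ne', one_smul]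
  · rw [smul_smul, mul_inv_cancel₀ (norm_ne_zero_iff.2 hτ), one_smul]

end Plane

theorem stmt_17_general (p q q' a b u d τ c c' : E2) (r r' : ℝ)
    (hu : ‖u‖ = 1) (hr : 0 < r) (hrr' : r ≤ r')
    (hc : c = p + r • u) (hc' : c' = p + r' • u)
    (hq : dist q c = r) (hq' : dist q' c = r)
    (hpq : p ≠ q) (hpq' : p ≠ q') (hqq' : q ≠ q')
    (hq'line : ∃ t : ℝ, q' = q + t • d)
    (ha : dist a c' = r') (hb : dist b c' = r')
    (haline : ∃ t : ℝ, a = q + t • d) (hbline : ∃ t : ℝ, b = q + t • d) (hab : a ≠ b)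
    (hτ : τ ≠ 0) (hτtan : ⟪τ, q - c⟫ = 0)
    (hτside : ⟪τ, (p - q) - (⟪p - q, q' - q⟫ / ‖q' - q‖ ^ 2) • (q' - q)⟫ ≤ 0) :
    (∀ w ∈ Metric.closedBall c r, (∃ t : ℝ, w = q + t • d) → w ∈ segment ℝ a b) ∧
    ∠ q' p q = InnerProductGeometry.angle (q' - q) τ ∧
    ∠ q' p q ≤ ∠ a p b := by
  have : Fact (Module.finrank ℝ E2 = 2) := ⟨finrank_euclideanSpace_fin⟩
  have hp : dist p c = r := by
    rw [hc, dist_self_add_right, norm_smul, hu, mul_one, Real.norm_of_nonneg hr.le]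
  have hcc' : dist c c' = r' - r := by
    rw [hc, hc', dist_add_left, dist_eq_norm, ← sub_smul, norm_smul, hu, mul_one,
      Real.norm_eq_abs, abs_sub_comm, abs_of_nonneg (sub_nonneg.2 hrr')]
  have hchord : ∀ w, dist w c ≤ r → (∃ t : ℝ, w = q + t • d) → Wbtw ℝ a w b := by
    intro w hw hwline
    have hcol : Collinear ℝ ({a, w, b} : Set E2) := by
      rw [collinear_iff_exists_forall_eq_smul_vadd]
      refine ⟨q, d, ?_⟩
      simp only [Set.mem_insert_iff, Set.mem_singleton_iff, vadd_eq_add, add_comm _ q]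
      rintro _ (rfl | rfl | rfl) <;> assumption
    exact hcol.wbtw_of_dist_eq_of_dist_le ha (by linarith [dist_triangle w c c']) hb hab
  refine ⟨fun w hw hwline => mem_segment_iff_wbtw.2 (hchord w hw hwline), ?_, ?_⟩
  · exact inscribed_angle_eq_tangent_chord_angle hp hq hq' hpq hpq' hqq' hτ hτtan hτside
  · exact angle_le_angle_of_wbtw_of_wbtw p (hchord q' hq'.le hq'line)
      (hchord q hq.le ⟨0, by rw [zero_smul, add_zero]⟩)

/-- Let `D = closedBall c r` and `D⁺ = closedBall c' r'` be internally tangent at `p` (both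
centers on the ray from `p` in the unit direction `u`, `r ≤ r'`, so `D ⊆ D⁺`), and let
`q ∈ ∂D ∩ int D⁺`. Let `ℓ'` be the line through `q` with direction `d`, meeting `∂D` again at
`q'` and meeting `∂D⁺` at the chord endpoints `a`, `b`. Let `τ` be a direction of the tangent
to `D` at `q` (`⟪τ, q − c⟫ = 0`), chosen on the opposite side of the line `qq'` from `p`.
Then: the chord `D ∩ ℓ'` is contained in the chord `D⁺ ∩ ℓ' = [a, b]`; the angle between `ℓ'`
and the tangent to `D` at `q` equals the inscribed angle `∠ q' p q` at which `p` sees the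
chord `D ∩ ℓ'`; and this angle is at most the angle `∠ a p b` at which `p` sees the chord
`D⁺ ∩ ℓ'`. -/
theorem stmt_17 (p q q' a b u d τ c c' : E2) (r r' : ℝ)
    (hu : ‖u‖ = 1) (hr : 0 < r) (hrr' : r ≤ r')
    (hc : c = p + r • u) (hc' : c' = p + r' • u)
    (hq : dist q c = r) (hq' : dist q' c = r) (hqint : dist q c' < r')
    (hpq : p ≠ q) (hpq' : p ≠ q') (hqq' : q ≠ q')
    (hd : d ≠ 0)
    (hq'line : ∃ t : ℝ, q' = q + t • d)
    (ha : dist a c' = r') (hb : dist b c' = r')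
    (haline : ∃ t : ℝ, a = q + t • d) (hbline : ∃ t : ℝ, b = q + t • d) (hab : a ≠ b)
    (hτ : τ ≠ 0) (hτtan : ⟪τ, q - c⟫ = 0)
    (hτside : ⟪τ, (p - q) - (⟪p - q, q' - q⟫ / ‖q' - q‖ ^ 2) • (q' - q)⟫ ≤ 0) :
    (∀ w ∈ Metric.closedBall c r, (∃ t : ℝ, w = q + t • d) → w ∈ segment ℝ a b) ∧
    ∠ q' p q = InnerProductGeometry.angle (q' - q) τ ∧
    ∠ q' p q ≤ ∠ a p b :=
  stmt_17_general p q q' a b u d τ c c' r r' hu hr hrr' hc hc' hq hq' hpq hpq' hqq' hq'line ha hb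
    haline hbline hab hτ hτtan hτside
end

section
/- Let p, q, r be three non-collinear points in ℝ² with r strictly to the left of the directed line from p to q, and let u be a direction. Suppose the Euclidean bisectors b_{pq} and b_{pr} (loci of centers of circles through the respective pairs) are both hit by the ray u[p], with u[p] hitting b_{pr} strictly before b_{pq}. Then the intersection point b_{pr} ∩ b_{pq} (the circumcenter of p, q, r) lies strictly to the right of the oriented line through u[p]; consequently, every ray ρ from p that lies counterclockwise to u[p] and intersects b_{pq} also hits b_{pr} strictly before b_{pq}. -/
/-!
A point `c` lies on `b_{px}` iff `2 ⟪c - p, x - p⟫ = ‖x - p‖²`, so `⟪c, r - p⟫` tells on which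
side of `b_{pr}` a point `c` lies. For `x, y ∈ b_{pq}` the planar identity
`‖q - p‖² ⟪y - x, r - p⟫ = 2 cross(x - p, y - p) cross(q - p, r - p)` makes this an orientation
statement: `y` is farther across `b_{pr}` than `x` iff `y` is counterclockwise of `x` seen from `p`.
With `x = o` and `y = u[p] ∩ b_{pq}` (which is across `b_{pr}`, since `u[p]` met it earlier) this
puts `o` to the right of `u[p]`. With `x = u[p] ∩ b_{pq}` and `y = ρ ∩ b_{pq}` it puts `y` across
`b_{pr}`, so `ρ` met `b_{pr}` before reaching `y`.
-/

open Real

open scoped InnerProductSpace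

section InnerProductSpace

variable {E : Type*} [NormedAddCommGroup E] [InnerProductSpace ℝ E]

lemma dist_eq_dist_iff_two_mul_inner {p x c : E} :
    dist c p = dist c x ↔ 2 * ⟪c - p, x - p⟫_ℝ = ‖x - p‖ ^ 2 := by
  rw [← AffineSubspace.mem_perpBisector_iff_dist_eq, AffineSubspace.mem_perpBisector_iff_inner_eq,
    vsub_eq_sub, vsub_eq_sub, dist_eq_norm']
  constructor <;> intro h <;> linarith

lemma dist_add_smul_eq_dist_iff {p x v : E} {t : ℝ} :
    dist (p + t • v) p = dist (p + t • v) x ↔ 2 * (t * ⟪v, x - p⟫_ℝ) = ‖x - p‖ ^ 2 := by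
  rw [dist_eq_dist_iff_two_mul_inner, add_sub_cancel_left, real_inner_smul_left]

lemma exists_dist_eq_of_lt_inner {p r v : E} {s : ℝ} (hs : 0 ≤ s)
    (h : ‖r - p‖ ^ 2 < 2 * (s * ⟪v, r - p⟫_ℝ)) :
    ∃ s₁, 0 ≤ s₁ ∧ s₁ < s ∧ dist (p + s₁ • v) p = dist (p + s₁ • v) r := by
  have hb : 0 < ⟪v, r - p⟫_ℝ := by nlinarith [sq_nonneg ‖r - p‖]
  refine ⟨‖r - p‖ ^ 2 / (2 * ⟪v, r - p⟫_ℝ), by positivity, ?_, ?_⟩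
  · rw [div_lt_iff₀ (by positivity)]; linarith
  · rw [dist_add_smul_eq_dist_iff]; field_simp

end InnerProductSpace

lemma cross2_anticomm (a b : ℂ) : cross2 a b = -cross2 b a := by
  unfold cross2; ring

lemma cross2_smul_left (t : ℝ) (a b : ℂ) : cross2 (t • a) b = t * cross2 a b := by
  simp only [cross2, Complex.real_smul, Complex.re_ofReal_mul, Complex.im_ofReal_mul]; ring

lemma cross2_smul_right (t : ℝ) (a b : ℂ) : cross2 a (t • b) = t * cross2 a b := by
  simp only [cross2, Complex.real_smul, Complex.re_ofReal_mul, Complex.im_ofReal_mul]; ring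

lemma cross2_mul_eq_sq_norm_mul_im (w z : ℂ) : cross2 z (w * z) = ‖z‖ ^ 2 * w.im := by
  simp only [cross2, Complex.mul_re, Complex.mul_im, Complex.sq_norm, Complex.normSq_apply]; ring

lemma sq_norm_mul_inner_eq (Q z R : ℂ) :
    ‖Q‖ ^ 2 * ⟪z, R⟫_ℝ = ⟪z, Q⟫_ℝ * ⟪Q, R⟫_ℝ + cross2 Q z * cross2 Q R := by
  simp only [Complex.inner, cross2, Complex.mul_re, Complex.conj_re, Complex.conj_im,
    Complex.sq_norm, Complex.normSq_apply]
  ring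

lemma sq_norm_mul_cross2_eq (Q x y : ℂ) :
    ‖Q‖ ^ 2 * cross2 x y = ⟪x, Q⟫_ℝ * cross2 Q y - ⟪y, Q⟫_ℝ * cross2 Q x := by
  simp only [Complex.inner, cross2, Complex.mul_re, Complex.conj_re, Complex.conj_im,
    Complex.sq_norm, Complex.normSq_apply]
  ring

lemma cross2_sub_right (a b c : ℂ) : cross2 a (b - c) = cross2 a b - cross2 a c := by
  simp only [cross2, Complex.sub_re, Complex.sub_im]; ring

lemma left_ne_zero_of_cross2_pos {a b : ℂ} (h : 0 < cross2 a b) : a ≠ 0 := by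
  rintro rfl; simp [cross2] at h

lemma right_ne_zero_of_cross2_pos {a b : ℂ} (h : 0 < cross2 a b) : b ≠ 0 := by
  rintro rfl; simp [cross2] at h

lemma inner_sub_pos_iff_cross2_pos {p q r x y : ℂ} (hqr : 0 < cross2 (q - p) (r - p))
    (hx : dist x p = dist x q) (hy : dist y p = dist y q) :
    0 < ⟪y - x, r - p⟫_ℝ ↔ 0 < cross2 (x - p) (y - p) := by
  have hQ : 0 < ‖q - p‖ ^ 2 := by
    have := left_ne_zero_of_cross2_pos hqr
    positivity
  have hx' := dist_eq_dist_iff_two_mul_inner.1 hx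
  have hy' := dist_eq_dist_iff_two_mul_inner.1 hy
  have horth : ⟪y - x, q - p⟫_ℝ = 0 := by
    rw [show y - x = (y - p) - (x - p) by abel, inner_sub_left]; linarith
  have hcross : cross2 (q - p) (y - x) = 2 * cross2 (x - p) (y - p) := by
    apply mul_left_cancel₀ hQ.ne'
    rw [show y - x = (y - p) - (x - p) by abel, cross2_sub_right]
    linear_combination (-2 : ℝ) * sq_norm_mul_cross2_eq (q - p) (x - p) (y - p)
      - cross2 (q - p) (y - p) * hx' + cross2 (q - p) (x - p) * hy'
  have hprod : ‖q - p‖ ^ 2 * ⟪y - x, r - p⟫_ℝ =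
      2 * cross2 (x - p) (y - p) * cross2 (q - p) (r - p) := by
    rw [sq_norm_mul_inner_eq, horth, hcross]; ring
  rw [← mul_pos_iff_of_pos_left hQ, hprod, mul_pos_iff_of_pos_right hqr,
    mul_pos_iff_of_pos_left two_pos]

theorem stmt_18_general (p q r o : ℂ)
    (hleft : 0 < cross2 (q - p) (r - p))
    (u : ℂ)
    (t₁ t₂ : ℝ) (ht₁ : 0 ≤ t₁) (ht₁₂ : t₁ < t₂)
    (hhitr : dist (p + t₁ • u) p = dist (p + t₁ • u) r)
    (hhitq : dist (p + t₂ • u) p = dist (p + t₂ • u) q)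
    (hoq : dist o p = dist o q) (hor : dist o p = dist o r) :
    cross2 u (o - p) < 0 ∧
    ∀ θ : ℝ, 0 < θ → θ < π → ∀ s₂ : ℝ, 0 ≤ s₂ →
      dist (p + s₂ • (Complex.exp ((θ : ℂ) * Complex.I) * u)) p =
        dist (p + s₂ • (Complex.exp ((θ : ℂ) * Complex.I) * u)) q →
      ∃ s₁ : ℝ, 0 ≤ s₁ ∧ s₁ < s₂ ∧
        dist (p + s₁ • (Complex.exp ((θ : ℂ) * Complex.I) * u)) p =
          dist (p + s₁ • (Complex.exp ((θ : ℂ) * Complex.I) * u)) r := by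
  have hR := dist_add_smul_eq_dist_iff.1 hhitr
  have hr : 0 < ‖r - p‖ ^ 2 := by
    have := right_ne_zero_of_cross2_pos hleft
    positivity
  have hur : 0 < ⟪u, r - p⟫_ℝ := by nlinarith
  have ht₂ : 0 < t₂ := ht₁.trans_lt ht₁₂
  have hXr : t₁ * ⟪u, r - p⟫_ℝ < t₂ * ⟪u, r - p⟫_ℝ := by gcongr
  constructor
  · have hO := dist_eq_dist_iff_two_mul_inner.1 hor
    have hXo : 0 < ⟪p + t₂ • u - o, r - p⟫_ℝ := by
      rw [show p + t₂ • u - o = t₂ • u - (o - p) by abel, inner_sub_left, real_inner_smul_left]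
      linarith
    have := (inner_sub_pos_iff_cross2_pos hleft hoq hhitq).1 hXo
    rw [add_sub_cancel_left, cross2_smul_right, cross2_anticomm] at this
    exact neg_pos.mp (pos_of_mul_pos_right this ht₂.le)
  · intro θ hθ₀ hθπ s₂ hs₂ hhit
    set v := Complex.exp ((θ : ℂ) * Complex.I) * u
    have hQ := dist_add_smul_eq_dist_iff.1 hhit
    have hq : 0 < ‖q - p‖ ^ 2 := by
      have := left_ne_zero_of_cross2_pos hleft
      positivity
    have hs₂pos : 0 < s₂ :=
      hs₂.lt_of_ne fun h ↦ by rw [← h, zero_mul, mul_zero] at hQ; linarith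
    have hu : u ≠ 0 := by rintro rfl; simp at hur
    have huv : 0 < cross2 u v := by
      rw [cross2_mul_eq_sq_norm_mul_im, Complex.exp_ofReal_mul_I_im]
      have := Real.sin_pos_of_pos_of_lt_pi hθ₀ hθπ
      positivity
    have hXY : 0 < cross2 (p + t₂ • u - p) (p + s₂ • v - p) := by
      rw [add_sub_cancel_left, add_sub_cancel_left, cross2_smul_left, cross2_smul_right]
      positivity
    have hYX := (inner_sub_pos_iff_cross2_pos hleft hhitq hhit).2 hXY
    rw [show p + s₂ • v - (p + t₂ • u) = s₂ • v - t₂ • u by abel, inner_sub_left,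
      real_inner_smul_left, real_inner_smul_left] at hYX
    exact exists_dist_eq_of_lt_inner hs₂ (by linarith)

/-- Key monotonicity claim in the proof of Lemma 3.3. Let `p, q, r ∈ ℂ ≅ ℝ²` be
non-collinear, with `r` strictly to the left of the directed line from `p` to `q`, and let
`u` be a unit direction such that the ray `u[p]` hits the perpendicular bisector `b_{pr}`
(at parameter `t₁`) strictly before the perpendicular bisector `b_{pq}` (at parameter `t₂`).
Then the circumcenter `o` of `p, q, r` lies strictly to the right of the oriented line through
`u[p]`; consequently every ray from `p` whose direction is a counterclockwise rotation of `u`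
by an angle in `(0, π)` that meets `b_{pq}` also hits `b_{pr}` strictly before `b_{pq}`. -/
theorem stmt_18 (p q r o : ℂ)
    (hncol : ¬ Collinear ℝ ({p, q, r} : Set ℂ))
    (hleft : 0 < cross2 (q - p) (r - p))
    (u : ℂ) (hu : ‖u‖ = 1)
    (t₁ t₂ : ℝ) (ht₁ : 0 ≤ t₁) (ht₁₂ : t₁ < t₂)
    (hhitr : dist (p + t₁ • u) p = dist (p + t₁ • u) r)
    (hhitq : dist (p + t₂ • u) p = dist (p + t₂ • u) q)
    (hoq : dist o p = dist o q) (hor : dist o p = dist o r) :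
    cross2 u (o - p) < 0 ∧
    ∀ θ : ℝ, 0 < θ → θ < π → ∀ s₂ : ℝ, 0 ≤ s₂ →
      dist (p + s₂ • (Complex.exp ((θ : ℂ) * Complex.I) * u)) p =
        dist (p + s₂ • (Complex.exp ((θ : ℂ) * Complex.I) * u)) q →
      ∃ s₁ : ℝ, 0 ≤ s₁ ∧ s₁ < s₂ ∧
        dist (p + s₁ • (Complex.exp ((θ : ℂ) * Complex.I) * u)) p =
          dist (p + s₁ • (Complex.exp ((θ : ℂ) * Complex.I) * u)) r :=
  stmt_18_general p q r o hleft u t₁ t₂ ht₁ ht₁₂ hhitr hhitq hoq hor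
end
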